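/- arXiv:2107.07282 — 7 statements merged into one kernel-verified Lean document; each statement's English description precedes it below -/
import Mathlib

section
/- Let n be a positive integer, Δt, Δx > 0, and let L¹, L² ∈ ℝ^{n×n} be the circulant matrices with entries (indices modulo n) L¹_{j,j±1} = 1/2 and L²_{j,j±1} = ±Δt/(2Δx), all other entries zero. Let A ∈ ℝ^{m×m} be symmetric with λ_max(A)·Δt/Δx ≤ 1, where λ_max(A) is the largest absolute eigenvalue of A (its spectral norm). Then for every u ∈ ℝ^{n×m}, the Lax–Friedrichs update satisfies ‖L¹ u − L² u Aᵀ‖_F ≤ ‖u‖_F. -/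
/-!
Row `j` of the update is `½ (u_{j+1} + u_{j-1}) - ½ T (u_{j+1} - u_{j-1})`, where `T = (Δt/Δx) A`
is a symmetric contraction by the CFL condition. The parallelogram law and the symmetry of `T` give
`‖row_j‖² ≤ ½ (‖u_{j+1}‖² - ⟪u_{j+1}, T u_{j+1}⟫) + ½ (‖u_{j-1}‖² + ⟪u_{j-1}, T u_{j-1}⟫)`,
and after summing over the periodic index the two energy terms `⟪u_j, T u_j⟫` cancel.
-/

open Matrix
open scoped Real

/- Indices live in `Fin n`, whose arithmetic is modulo `n`; this makes the matrices circulant. -/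

noncomputable def L1 (n : ℕ) [NeZero n] : Matrix (Fin n) (Fin n) ℝ :=
  Matrix.of fun j k => (if k = j + 1 then (1 / 2 : ℝ) else 0) + (if k = j - 1 then (1 / 2 : ℝ) else 0)

noncomputable def L2 (n : ℕ) [NeZero n] (Δt Δx : ℝ) : Matrix (Fin n) (Fin n) ℝ :=
  Matrix.of fun j k =>
    (if k = j + 1 then Δt / (2 * Δx) else 0) + (if k = j - 1 then -(Δt / (2 * Δx)) else 0)

noncomputable def frob {n m : ℕ} (M : Matrix (Fin n) (Fin m) ℝ) : ℝ :=
  Real.sqrt (∑ i, ∑ j, (M i j) ^ 2)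

/- For symmetric `A` this is the largest absolute eigenvalue `λ_max(A)`. -/
noncomputable def specNorm {m : ℕ} (A : Matrix (Fin m) (Fin m) ℝ) : ℝ :=
  ‖Matrix.toEuclideanCLM (𝕜 := ℝ) A‖

open scoped RealInnerProductSpace

section LaxFriedrichsEnergy

variable {E : Type*} [NormedAddCommGroup E] [InnerProductSpace ℝ E]
  {T : E →L[ℝ] E} (hT : (T : E →ₗ[ℝ] E).IsSymmetric) (hT1 : ‖T‖ ≤ 1)
include hT hT1

theorem norm_sq_laxFriedrichs_le (x y : E) :
    ‖(2⁻¹ : ℝ) • (x + y - T (x - y))‖ ^ 2 ≤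
      (‖x‖ ^ 2 - ⟪x, T x⟫) / 2 + (‖y‖ ^ 2 + ⟪y, T y⟫) / 2 := by
  have hcross : ⟪x + y, T (x - y)⟫ = ⟪x, T x⟫ - ⟪y, T y⟫ := by
    have hyx : ⟪y, T x⟫ = ⟪x, T y⟫ := by rw [real_inner_comm, hT.apply_clm]
    simp only [map_sub, inner_add_left, inner_sub_right, hyx]
    ring
  have hpar := parallelogram_law_with_norm ℝ x y
  have hcontr : ‖T (x - y)‖ ≤ ‖x - y‖ := by simpa using T.le_of_opNorm_le hT1 (x - y)
  have hsq : ‖T (x - y)‖ ^ 2 ≤ ‖x - y‖ ^ 2 := by gcongr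
  rw [norm_smul, mul_pow, norm_sub_sq_real, hcross, Real.norm_of_nonneg (by norm_num)]
  nlinarith

theorem sum_norm_sq_laxFriedrichs_le {G : Type*} [AddGroup G] [Fintype G] (s : G) (f : G → E) :
    ∑ j, ‖(2⁻¹ : ℝ) • (f (j + s) + f (j - s) - T (f (j + s) - f (j - s)))‖ ^ 2 ≤
      ∑ j, ‖f j‖ ^ 2 := by
  set q : E → ℝ := fun x => ⟪x, T x⟫
  calc _ ≤ ∑ j, ((‖f (j + s)‖ ^ 2 - q (f (j + s))) / 2 + (‖f (j - s)‖ ^ 2 + q (f (j - s))) / 2) :=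
        Finset.sum_le_sum fun j _ => norm_sq_laxFriedrichs_le hT hT1 _ _
    _ = ∑ j, ((‖f j‖ ^ 2 - q (f j)) / 2 + (‖f j‖ ^ 2 + q (f j)) / 2) := by
        rw [Finset.sum_add_distrib, Finset.sum_add_distrib]
        congr 1
        exacts [Fintype.sum_equiv (Equiv.addRight s) _ _ fun _ => rfl,
          Fintype.sum_equiv (Equiv.subRight s) _ _ fun _ => rfl]
    _ = ∑ j, ‖f j‖ ^ 2 := by congr! 1 with j; ring

end LaxFriedrichsEnergy

theorem L1_mul_apply {α : Type*} (n : ℕ) [NeZero n] (u : Matrix (Fin n) α ℝ) (j : Fin n) :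
    (L1 n * u) j = (2⁻¹ : ℝ) • (u (j + 1) + u (j - 1)) := by
  ext k
  simp only [L1, one_div, Matrix.mul_apply, of_apply, add_mul, ite_mul, zero_mul,
    Finset.sum_add_distrib, Finset.sum_ite_eq', Finset.mem_univ, ↓reduceIte, Pi.smul_apply,
    Pi.add_apply, smul_eq_mul]
  ring

theorem L2_mul_apply {α : Type*} (n : ℕ) [NeZero n] (Δt Δx : ℝ) (u : Matrix (Fin n) α ℝ)
    (j : Fin n) : (L2 n Δt Δx * u) j = (Δt / (2 * Δx)) • (u (j + 1) - u (j - 1)) := by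
  ext k
  simp only [L2, Matrix.mul_apply, of_apply, add_mul, ite_mul, zero_mul, neg_mul,
    Finset.sum_add_distrib, Finset.sum_ite_eq', Finset.mem_univ, ↓reduceIte, Pi.smul_apply,
    Pi.sub_apply, smul_eq_mul]
  ring

theorem toLp_laxFriedrichs_row (n m : ℕ) [NeZero n] (Δt Δx : ℝ) (A : Matrix (Fin m) (Fin m) ℝ)
    (u : Matrix (Fin n) (Fin m) ℝ) (j : Fin n) :
    WithLp.toLp 2 ((L1 n * u - L2 n Δt Δx * u * Aᵀ) j) =
      (2⁻¹ : ℝ) • (WithLp.toLp 2 (u (j + 1)) + WithLp.toLp 2 (u (j - 1)) -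
        ((Δt / Δx) • toEuclideanCLM (𝕜 := ℝ) A)
          (WithLp.toLp 2 (u (j + 1)) - WithLp.toLp 2 (u (j - 1)))) := by
  ext k
  simp only [Matrix.sub_apply]
  rw [mul_apply_eq_vecMul _ Aᵀ, vecMul_transpose, L1_mul_apply, L2_mul_apply]
  simp only [Pi.smul_apply, Pi.add_apply, smul_eq_mul, mulVec_smul, mulVec_sub, Pi.sub_apply,
    _root_.smul_apply, map_sub, toEuclideanCLM_toLp, PiLp.smul_apply, PiLp.sub_apply,
    PiLp.add_apply]
  ring

theorem frob_eq_sqrt_sum_norm_sq {n m : ℕ} (M : Matrix (Fin n) (Fin m) ℝ) :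
    frob M = √(∑ j, ‖WithLp.toLp 2 (M j)‖ ^ 2) := by
  simp only [frob, EuclideanSpace.real_norm_sq_eq]

theorem stmt3 (n m : ℕ) [NeZero n] (Δt Δx : ℝ) (hΔt : 0 < Δt) (hΔx : 0 < Δx)
    (A : Matrix (Fin m) (Fin m) ℝ) (hA : A.IsSymm)
    (hCFL : specNorm A * Δt / Δx ≤ 1)
    (u : Matrix (Fin n) (Fin m) ℝ) :
    frob (L1 n * u - L2 n Δt Δx * u * Aᵀ) ≤ frob u := by
  set T := (Δt / Δx) • toEuclideanCLM (𝕜 := ℝ) A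
  have hT : (T : EuclideanSpace ℝ (Fin m) →ₗ[ℝ] _).IsSymmetric :=
    (isSymmetric_toEuclideanLin_iff.mpr hA).smul (conj_trivial _)
  have hT1 : ‖T‖ ≤ 1 := by
    rw [norm_smul, Real.norm_of_nonneg (div_pos hΔt hΔx).le, mul_comm, ← mul_div_assoc]
    exact hCFL
  rw [frob_eq_sqrt_sum_norm_sq, frob_eq_sqrt_sum_norm_sq]
  apply Real.sqrt_le_sqrt
  simpa only [toLp_laxFriedrichs_row] using
    sum_norm_sq_laxFriedrichs_le hT hT1 1 fun j => WithLp.toLp 2 (u j)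
end

section
/- Let n be a positive integer, Δt, Δx > 0, and let L¹, L² ∈ ℝ^{n×n} be the circulant matrices with entries (indices modulo n) L¹_{j,j±1} = 1/2 and L²_{j,j±1} = ±Δt/(2Δx), all other entries zero. Let A ∈ ℝ^{m×m} be symmetric and set c = λ_max(A)·Δt/Δx. Then for every u ∈ ℝ^{n×m}: ‖L¹ u − L² u Aᵀ‖_F ≤ (max over α ∈ {1,…,n} of √(cos²(2πα/n) + c² sin²(2πα/n))) · ‖u‖_F. -/
open Matrix
open scoped Real

/-!
Right multiplication by an orthogonal matrix diagonalising `A` preserves the Frobenius norm and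
decouples the columns: the column belonging to an eigenvalue `l` of `A` is acted on by the
two-point stencil `v ↦ a • v (· + 1) + b • v (· - 1)` with `a + b = 1` and `b - a = l Δt / Δx`.
The characters `ψ` of `Fin n` diagonalise this stencil with multiplier `a ψ(-1) + b ψ(1)`; writing
`ψ(1) = exp (i θ)` with `θ = 2πα/n`, its squared modulus is `cos² θ + (b - a)² sin² θ`, which is at
most `cos² θ + c² sin² θ` because `|l| ≤ λ_max(A)`. Parseval turns this bound on the multipliers
into the bound on the norm.
-/

open scoped ComplexConjugate

section CharacterSums

variable {G : Type*} [AddCommGroup G] [Fintype G]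

noncomputable def charDFT (v : G → ℂ) (ψ : AddChar G ℂ) : ℂ :=
  ∑ x, ψ x * v x

theorem sum_normSq_charDFT (v : G → ℂ) :
    ∑ ψ, Complex.normSq (charDFT v ψ) = Fintype.card G * ∑ x, Complex.normSq (v x) := by
  classical
  have hcomplex : ∑ ψ, (Complex.normSq (charDFT v ψ) : ℂ)
      = Fintype.card G * ∑ x, (Complex.normSq (v x) : ℂ) := by
    calc ∑ ψ, (Complex.normSq (charDFT v ψ) : ℂ)
        = ∑ ψ : AddChar G ℂ, ∑ x, ∑ y, v x * conj (v y) * ψ (x - y) := by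
          refine Finset.sum_congr rfl fun ψ _ => ?_
          rw [← Complex.mul_conj, charDFT, map_sum, Finset.sum_mul_sum]
          refine Finset.sum_congr rfl fun x _ => Finset.sum_congr rfl fun y _ => ?_
          rw [sub_eq_add_neg, AddChar.map_add_eq_mul, AddChar.map_neg_eq_conj, map_mul]
          ring
      _ = ∑ x, ∑ y, v x * conj (v y) * ∑ ψ : AddChar G ℂ, ψ (x - y) := by
          simp only [Finset.mul_sum]
          rw [Finset.sum_comm]
          exact Finset.sum_congr rfl fun x _ => Finset.sum_comm
      _ = Fintype.card G * ∑ x, (Complex.normSq (v x) : ℂ) := by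
          simp only [AddChar.sum_apply_eq_ite, sub_eq_zero, mul_ite, mul_zero,
            Finset.sum_ite_eq, Finset.mem_univ, if_true, Finset.mul_sum, Complex.mul_conj]
          exact Finset.sum_congr rfl fun x _ => mul_comm _ _
  exact_mod_cast hcomplex

theorem charDFT_comp_add_right (v : G → ℂ) (g : G) (ψ : AddChar G ℂ) :
    charDFT (fun x => v (x + g)) ψ = ψ (-g) * charDFT v ψ := by
  rw [charDFT, charDFT, Finset.mul_sum,
    ← Equiv.sum_comp (Equiv.addRight g) (fun y => ψ (-g) * (ψ y * v y))]
  refine Finset.sum_congr rfl fun x _ => ?_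
  simp only [Equiv.coe_addRight]
  rw [← mul_assoc, ← AddChar.map_add_eq_mul, show -g + (x + g) = x by abel]

theorem charDFT_stencil (a b : ℂ) (g : G) (v : G → ℂ) (ψ : AddChar G ℂ) :
    charDFT (fun x => a * v (x + g) + b * v (x - g)) ψ = (a * ψ (-g) + b * ψ g) * charDFT v ψ := by
  have hshift := charDFT_comp_add_right v
  simp only [sub_eq_add_neg] at hshift ⊢
  rw [add_mul, mul_assoc, mul_assoc, ← hshift, ← neg_neg g, ← hshift, neg_neg, charDFT, charDFT,
    charDFT, Finset.mul_sum, Finset.mul_sum, ← Finset.sum_add_distrib]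
  exact Finset.sum_congr rfl fun x _ => by ring

theorem sum_normSq_le_of_charDFT_eq_mul {v w : G → ℂ} {μ : AddChar G ℂ → ℂ} {K : ℝ}
    (hw : ∀ ψ, charDFT w ψ = μ ψ * charDFT v ψ) (hμ : ∀ ψ, Complex.normSq (μ ψ) ≤ K) :
    ∑ x, Complex.normSq (w x) ≤ K * ∑ x, Complex.normSq (v x) := by
  have hcard : (0 : ℝ) < Fintype.card G := by exact_mod_cast Fintype.card_pos
  refine le_of_mul_le_mul_left ?_ hcard
  calc (Fintype.card G : ℝ) * ∑ x, Complex.normSq (w x)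
      = ∑ ψ, Complex.normSq (μ ψ) * Complex.normSq (charDFT v ψ) := by
        simp only [← sum_normSq_charDFT, hw, map_mul]
    _ ≤ ∑ ψ, K * Complex.normSq (charDFT v ψ) :=
        Finset.sum_le_sum fun ψ _ => mul_le_mul_of_nonneg_right (hμ ψ) (Complex.normSq_nonneg _)
    _ = Fintype.card G * (K * ∑ x, Complex.normSq (v x)) := by
        rw [← Finset.mul_sum, sum_normSq_charDFT]; ring

end CharacterSums

theorem exists_addChar_fin_apply_one {n : ℕ} [NeZero n] (ψ : AddChar (Fin n) ℂ) :
    ∃ α ∈ Finset.Icc 1 n, ψ 1 = Complex.exp ((2 * π * α / n : ℝ) * Complex.I) := by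
  have hroot : ψ 1 ^ n = 1 := by
    simpa [← AddChar.map_nsmul_eq_pow] using congrArg ψ (card_nsmul_eq_zero (x := (1 : Fin n)))
  obtain ⟨i, hi, hψ⟩ := (Complex.isPrimitiveRoot_exp n (NeZero.ne n)).eq_pow_of_pow_eq_one hroot
  have hexp : ∀ k : ℕ, Complex.exp (2 * π * Complex.I / n) ^ k
      = Complex.exp ((2 * π * k / n : ℝ) * Complex.I) := by
    intro k
    rw [← Complex.exp_nat_mul]
    push_cast
    ring_nf
  rcases Nat.eq_zero_or_pos i with rfl | hpos
  · refine ⟨n, Finset.mem_Icc.mpr ⟨NeZero.one_le, le_rfl⟩, ?_⟩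
    rw [← hψ, ← hexp, pow_zero, (Complex.isPrimitiveRoot_exp n (NeZero.ne n)).pow_eq_one]
  · exact ⟨i, Finset.mem_Icc.mpr ⟨hpos, hi.le⟩, by rw [← hψ, hexp]⟩

theorem normSq_mul_conj_add_mul_exp (a b θ : ℝ) (hab : a + b = 1) :
    Complex.normSq (a * conj (Complex.exp (θ * Complex.I)) + b * Complex.exp (θ * Complex.I))
      = Real.cos θ ^ 2 + (b - a) ^ 2 * Real.sin θ ^ 2 := by
  have h : (a : ℂ) * conj (Complex.exp (θ * Complex.I)) + b * Complex.exp (θ * Complex.I)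
      = (Real.cos θ : ℂ) + ((b - a) * Real.sin θ : ℝ) * Complex.I := by
    rw [Complex.exp_mul_I, ← Complex.ofReal_cos, ← Complex.ofReal_sin]
    simp only [map_add, map_mul, Complex.conj_ofReal, Complex.conj_I]
    have habC : (a : ℂ) + b = 1 := by exact_mod_cast hab
    push_cast
    linear_combination Complex.cos θ * habC
  rw [h, Complex.normSq_add_mul_I]
  ring

noncomputable def laxFriedrichsAmplification (n : ℕ) [NeZero n] (c : ℝ) : ℝ :=
  (Finset.Icc 1 n).sup' (Finset.nonempty_Icc.mpr (Nat.one_le_iff_ne_zero.mpr (NeZero.ne n)))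
    (fun α : ℕ => Real.sqrt (Real.cos (2 * π * α / n) ^ 2 + c ^ 2 * Real.sin (2 * π * α / n) ^ 2))

theorem sqrt_le_laxFriedrichsAmplification {n : ℕ} [NeZero n] (c : ℝ) {α : ℕ}
    (hα : α ∈ Finset.Icc 1 n) :
    Real.sqrt (Real.cos (2 * π * α / n) ^ 2 + c ^ 2 * Real.sin (2 * π * α / n) ^ 2)
      ≤ laxFriedrichsAmplification n c :=
  Finset.le_sup' (fun α : ℕ => Real.sqrt (Real.cos (2 * π * α / n) ^ 2
    + c ^ 2 * Real.sin (2 * π * α / n) ^ 2)) hα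

theorem laxFriedrichsAmplification_nonneg (n : ℕ) [NeZero n] (c : ℝ) :
    0 ≤ laxFriedrichsAmplification n c :=
  (Real.sqrt_nonneg _).trans
    (sqrt_le_laxFriedrichsAmplification c (Finset.mem_Icc.mpr ⟨NeZero.one_le, le_rfl⟩))

theorem cos_sq_add_mul_sin_sq_le_laxFriedrichsAmplification_sq {n : ℕ} [NeZero n] {c s : ℝ}
    (hs : s ≤ c ^ 2) {α : ℕ} (hα : α ∈ Finset.Icc 1 n) :
    Real.cos (2 * π * α / n) ^ 2 + s * Real.sin (2 * π * α / n) ^ 2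
      ≤ laxFriedrichsAmplification n c ^ 2 :=
  calc Real.cos (2 * π * α / n) ^ 2 + s * Real.sin (2 * π * α / n) ^ 2
      ≤ Real.cos (2 * π * α / n) ^ 2 + c ^ 2 * Real.sin (2 * π * α / n) ^ 2 := by gcongr
    _ = Real.sqrt (Real.cos (2 * π * α / n) ^ 2 + c ^ 2 * Real.sin (2 * π * α / n) ^ 2) ^ 2 :=
        (Real.sq_sqrt (by positivity)).symm
    _ ≤ laxFriedrichsAmplification n c ^ 2 := by
        gcongr
        exact sqrt_le_laxFriedrichsAmplification c hα

theorem sum_sq_stencil_le {n : ℕ} [NeZero n] {a b c : ℝ} (hab : a + b = 1)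
    (hba : (b - a) ^ 2 ≤ c ^ 2) (v : Fin n → ℝ) :
    ∑ j, (a * v (j + 1) + b * v (j - 1)) ^ 2 ≤ laxFriedrichsAmplification n c ^ 2 * ∑ j, v j ^ 2 := by
  have hmode : ∀ ψ : AddChar (Fin n) ℂ,
      Complex.normSq (a * ψ (-1) + b * ψ 1) ≤ laxFriedrichsAmplification n c ^ 2 := by
    intro ψ
    obtain ⟨α, hα, hψ⟩ := exists_addChar_fin_apply_one ψ
    rw [AddChar.map_neg_eq_conj, hψ, normSq_mul_conj_add_mul_exp a b _ hab]
    exact cos_sq_add_mul_sin_sq_le_laxFriedrichsAmplification_sq hba hα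
  have h := sum_normSq_le_of_charDFT_eq_mul (v := fun j => (v j : ℂ))
    (charDFT_stencil (a : ℂ) b 1 _) hmode
  simpa only [← Complex.ofReal_mul, ← Complex.ofReal_add, Complex.normSq_ofReal, ← sq] using h

theorem abs_eigenvalues_le_specNorm {m : ℕ} {A : Matrix (Fin m) (Fin m) ℝ} (hA : A.IsHermitian)
    (k : Fin m) : |hA.eigenvalues k| ≤ specNorm A := by
  have : Nonempty (Fin m) := ⟨k⟩
  have hmem : hA.eigenvalues k ∈ spectrum ℝ (Matrix.toEuclideanCLM (𝕜 := ℝ) A) := by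
    rw [AlgEquiv.spectrum_eq]
    exact hA.eigenvalues_mem_spectrum_real k
  exact spectrum.norm_le_norm_of_mem hmem

theorem exists_orthogonal_mul_eq_mul_diagonal {m : ℕ} {A : Matrix (Fin m) (Fin m) ℝ}
    (hA : A.IsSymm) : ∃ (Q : Matrix (Fin m) (Fin m) ℝ) (d : Fin m → ℝ),
      Q * Qᵀ = 1 ∧ A * Q = Q * diagonal d ∧ ∀ k, |d k| ≤ specNorm A := by
  have hH : A.IsHermitian := hA
  refine ⟨hH.eigenvectorUnitary, hH.eigenvalues, ?_, ?_, abs_eigenvalues_le_specNorm hH⟩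
  · simpa [Matrix.star_eq_conjTranspose] using Unitary.coe_mul_star_self hH.eigenvectorUnitary
  · ext i k
    have := congrFun (hH.mulVec_eigenvectorBasis k) i
    simp only [mul_diagonal]
    simpa [Matrix.mul_apply, mulVec, dotProduct, mul_comm] using this

theorem frob_mul_orthogonal {n m : ℕ} (X : Matrix (Fin n) (Fin m) ℝ) {Q : Matrix (Fin m) (Fin m) ℝ}
    (hQ : Q * Qᵀ = 1) : frob (X * Q) = frob X := by
  have hsum : ∀ Y : Matrix (Fin n) (Fin m) ℝ, ∑ i, ∑ j, Y i j ^ 2 = (Y * Yᵀ).trace := by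
    intro Y
    simp [Matrix.trace, Matrix.mul_apply, sq]
  rw [frob, frob, hsum, hsum, transpose_mul, Matrix.mul_assoc, ← Matrix.mul_assoc Q, hQ,
    Matrix.one_mul]

theorem frob_le_mul_of_sum_sq_col_le {n m : ℕ} {X Y : Matrix (Fin n) (Fin m) ℝ} {K : ℝ}
    (hK : 0 ≤ K) (hcol : ∀ k, ∑ i, X i k ^ 2 ≤ K ^ 2 * ∑ i, Y i k ^ 2) : frob X ≤ K * frob Y := by
  rw [frob, frob, ← Real.sqrt_sq hK, ← Real.sqrt_mul (sq_nonneg K)]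
  gcongr
  rw [Finset.sum_comm, Finset.sum_comm (f := fun i k => Y i k ^ 2), Finset.mul_sum]
  exact Finset.sum_le_sum fun k _ => hcol k

theorem mul_sub_mul_mul_diagonal_apply {n m : ℕ} (B C : Matrix (Fin n) (Fin n) ℝ)
    (W : Matrix (Fin n) (Fin m) ℝ) (d : Fin m → ℝ) (i : Fin n) (k : Fin m) :
    (B * W - C * W * diagonal d) i k = (B *ᵥ Wᵀ k - d k • C *ᵥ Wᵀ k) i := by
  rw [Matrix.sub_apply, mul_diagonal, Pi.sub_apply, Pi.smul_apply, smul_eq_mul, mul_comm]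
  rfl

theorem L1_mulVec_apply {n : ℕ} [NeZero n] (v : Fin n → ℝ) (i : Fin n) :
    (L1 n *ᵥ v) i = (v (i + 1) + v (i - 1)) / 2 := by
  simp only [L1, mulVec, dotProduct, of_apply, add_mul, ite_mul, zero_mul, Finset.sum_add_distrib,
    Finset.sum_ite_eq', Finset.mem_univ, if_true]
  ring

theorem L2_mulVec_apply {n : ℕ} [NeZero n] (Δt Δx : ℝ) (v : Fin n → ℝ) (i : Fin n) :
    (L2 n Δt Δx *ᵥ v) i = Δt / (2 * Δx) * (v (i + 1) - v (i - 1)) := by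
  simp only [L2, mulVec, dotProduct, of_apply, add_mul, ite_mul, zero_mul, Finset.sum_add_distrib,
    Finset.sum_ite_eq', Finset.mem_univ, if_true]
  ring

theorem sum_sq_L1_sub_smul_L2_mulVec_le {n : ℕ} [NeZero n] {Δt Δx c l : ℝ}
    (hl : (l * Δt / Δx) ^ 2 ≤ c ^ 2) (v : Fin n → ℝ) :
    ∑ i, ((L1 n *ᵥ v - l • L2 n Δt Δx *ᵥ v) i) ^ 2
      ≤ laxFriedrichsAmplification n c ^ 2 * ∑ i, v i ^ 2 := by
  have hstencil : ∀ i, (L1 n *ᵥ v - l • L2 n Δt Δx *ᵥ v) i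
      = (1 / 2 - l * (Δt / (2 * Δx))) * v (i + 1) + (1 / 2 + l * (Δt / (2 * Δx))) * v (i - 1) := by
    intro i
    rw [Pi.sub_apply, Pi.smul_apply, L1_mulVec_apply, L2_mulVec_apply, smul_eq_mul]
    ring
  simp only [hstencil]
  refine sum_sq_stencil_le ?_ ?_ v
  · ring
  · convert hl using 2
    ring

theorem stmt4_general (n m : ℕ) [NeZero n] (Δt Δx : ℝ)
    (A : Matrix (Fin m) (Fin m) ℝ) (hA : A.IsSymm)
    (c : ℝ) (hc : c = specNorm A * Δt / Δx)
    (u : Matrix (Fin n) (Fin m) ℝ) :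
    frob (L1 n * u - L2 n Δt Δx * u * Aᵀ)
      ≤ ((Finset.Icc 1 n).sup'
            (Finset.nonempty_Icc.mpr (Nat.one_le_iff_ne_zero.mpr (NeZero.ne n)))
            (fun α : ℕ =>
              Real.sqrt (Real.cos (2 * π * α / n) ^ 2 + c ^ 2 * Real.sin (2 * π * α / n) ^ 2)))
        * frob u := by
  obtain ⟨Q, d, hQ, hAQ, hd⟩ := exists_orthogonal_mul_eq_mul_diagonal hA
  have hcol : ∀ k, ∑ i, ((L1 n * (u * Q) - L2 n Δt Δx * (u * Q) * diagonal d) i k) ^ 2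
      ≤ laxFriedrichsAmplification n c ^ 2 * ∑ i, (u * Q) i k ^ 2 := by
    intro k
    have hdk : (d k * Δt / Δx) ^ 2 ≤ c ^ 2 := by
      rw [hc, mul_div_assoc, mul_div_assoc, mul_pow, mul_pow, ← sq_abs (d k)]
      gcongr
      exact hd k
    simpa only [mul_sub_mul_mul_diagonal_apply, transpose_apply] using
      sum_sq_L1_sub_smul_L2_mulVec_le hdk ((u * Q)ᵀ k)
  calc frob (L1 n * u - L2 n Δt Δx * u * Aᵀ)
      = frob ((L1 n * u - L2 n Δt Δx * u * Aᵀ) * Q) := (frob_mul_orthogonal _ hQ).symm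
    _ = frob (L1 n * (u * Q) - L2 n Δt Δx * (u * Q) * diagonal d) := by
        simp only [hA.eq, Matrix.sub_mul, Matrix.mul_assoc, hAQ]
    _ ≤ laxFriedrichsAmplification n c * frob (u * Q) :=
        frob_le_mul_of_sum_sq_col_le (laxFriedrichsAmplification_nonneg n c) hcol
    _ = laxFriedrichsAmplification n c * frob u := by rw [frob_mul_orthogonal _ hQ]

theorem stmt4 (n m : ℕ) [NeZero n] (Δt Δx : ℝ) (hΔt : 0 < Δt) (hΔx : 0 < Δx)
    (A : Matrix (Fin m) (Fin m) ℝ) (hA : A.IsSymm)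
    (c : ℝ) (hc : c = specNorm A * Δt / Δx)
    (u : Matrix (Fin n) (Fin m) ℝ) :
    frob (L1 n * u - L2 n Δt Δx * u * Aᵀ)
      ≤ ((Finset.Icc 1 n).sup'
            (Finset.nonempty_Icc.mpr (Nat.one_le_iff_ne_zero.mpr (NeZero.ne n)))
            (fun α : ℕ =>
              Real.sqrt (Real.cos (2 * π * α / n) ^ 2 + c ^ 2 * Real.sin (2 * π * α / n) ^ 2)))
        * frob u :=
  stmt4_general n m Δt Δx A hA c hc u
end

section
/- Let n be a positive integer, Δt, Δx > 0, and let L¹, L² ∈ ℝ^{n×n} be the circulant matrices with entries (indices modulo n) L¹_{j,j±1} = 1/2 and L²_{j,j±1} = ±Δt/(2Δx), all other entries zero. Let A ∈ ℝ^{m×m} be symmetric with c = λ_max(A)·Δt/Δx, and let G ∈ ℝ^{m×m} be a diagonal real matrix with diagonal entries G_{ℓℓ}. Then for every u ∈ ℝ^{n×m}, the split streaming–scattering update satisfies ‖(L¹ u − L² u Aᵀ)(I + Δt·G)‖_F ≤ (max over ℓ of |1 + Δt·G_{ℓℓ}|) · (max over α ∈ {1,…,n} of √(cos²(2πα/n)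 + c² sin²(2πα/n))) · ‖u‖_F. -/
open Matrix
open scoped Real

namespace StabAux

open Complex Finset

variable {N : ℕ} [NeZero N]

lemma conj_char (x : ZMod N) : (starRingEnd ℂ) (ZMod.stdAddChar x) = ZMod.stdAddChar (-x) := by
  rw [ZMod.stdAddChar_apply, ZMod.stdAddChar_apply, AddChar.map_neg_eq_inv]
  exact_mod_cast (Circle.coe_inv_eq_conj _).symm

/-- Unnormalized discrete Fourier transform. -/
noncomputable def F (Φ : ZMod N → ℂ) (α : ZMod N) : ℂ := ∑ j, ZMod.stdAddChar (j * α) * Φ j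

lemma key_orth (j i : ZMod N) :
    ∑ α : ZMod N, ZMod.stdAddChar (j * α) * (starRingEnd ℂ) (ZMod.stdAddChar (i * α))
      = if j = i then (N : ℂ) else 0 := by
  have h : ∀ α : ZMod N, ZMod.stdAddChar (j * α) * (starRingEnd ℂ) (ZMod.stdAddChar (i * α))
      = ZMod.stdAddChar (α * (j - i)) := by
    intro α
    rw [conj_char, ← AddChar.map_add_eq_mul]
    ring_nf
  simp_rw [h]
  rw [AddChar.sum_mulShift _ (ZMod.isPrimitive_stdAddChar N)]
  simp [sub_eq_zero, ZMod.card]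

lemma parsevalC (Φ : ZMod N → ℂ) :
    ∑ α, F Φ α * (starRingEnd ℂ) (F Φ α) = (N : ℂ) * ∑ j, Φ j * (starRingEnd ℂ) (Φ j) := by
  have h1 : ∀ α, F Φ α * (starRingEnd ℂ) (F Φ α)
      = ∑ j, ∑ i, (Φ j * (starRingEnd ℂ) (Φ i)) *
          (ZMod.stdAddChar (j * α) * (starRingEnd ℂ) (ZMod.stdAddChar (i * α))) := by
    intro α
    rw [F, map_sum, Finset.sum_mul_sum]
    refine Finset.sum_congr rfl fun j _ => Finset.sum_congr rfl fun i _ => ?_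
    rw [map_mul (starRingEnd ℂ)]; ring
  simp_rw [h1]
  rw [Finset.sum_comm]
  have h2 : ∀ j, ∑ α : ZMod N, ∑ i, (Φ j * (starRingEnd ℂ) (Φ i)) *
      (ZMod.stdAddChar (j * α) * (starRingEnd ℂ) (ZMod.stdAddChar (i * α)))
      = (N : ℂ) * (Φ j * (starRingEnd ℂ) (Φ j)) := by
    intro j
    rw [Finset.sum_comm]
    simp_rw [← Finset.mul_sum, key_orth]
    simp [mul_comm]
  simp_rw [h2, ← Finset.mul_sum]

lemma parseval (Φ : ZMod N → ℂ) :
    ∑ α, Complex.normSq (F Φ α) = (N : ℝ) * ∑ j, Complex.normSq (Φ j) := by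
  have := parsevalC Φ
  simp_rw [Complex.mul_conj] at this
  exact_mod_cast this

lemma F_shift (Φ : ZMod N → ℂ) (α : ZMod N) :
    F (fun j => Φ (j + 1)) α = ZMod.stdAddChar (-α) * F Φ α := by
  rw [F, F, Finset.mul_sum]
  refine Fintype.sum_equiv (Equiv.addRight (1 : ZMod N)) _ _ fun j => ?_
  simp only [Equiv.coe_addRight, add_sub_cancel_right]
  rw [← mul_assoc, ← AddChar.map_add_eq_mul]
  ring_nf

lemma F_shift' (Φ : ZMod N → ℂ) (α : ZMod N) :
    F (fun j => Φ (j - 1)) α = ZMod.stdAddChar α * F Φ α := by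
  rw [F, F, Finset.mul_sum]
  refine Fintype.sum_equiv (Equiv.addRight (1 : ZMod N)).symm _ _ fun j => ?_
  simp only [Equiv.symm_apply_apply, Equiv.coe_addRight, Equiv.addRight_symm_apply,
    add_sub_cancel_right]
  rw [← mul_assoc, ← AddChar.map_add_eq_mul]
  ring_nf

lemma F_add (Φ Ψ : ZMod N → ℂ) (α : ZMod N) :
    F (fun j => Φ j + Ψ j) α = F Φ α + F Ψ α := by
  simp [F, mul_add, Finset.sum_add_distrib]

lemma F_sub (Φ Ψ : ZMod N → ℂ) (α : ZMod N) :
    F (fun j => Φ j - Ψ j) α = F Φ α - F Ψ α := by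
  simp [F, mul_sub, Finset.sum_sub_distrib]

lemma F_cmul (z : ℂ) (Φ : ZMod N → ℂ) (α : ZMod N) :
    F (fun j => z * Φ j) α = z * F Φ α := by
  simp only [F, Finset.mul_sum]
  exact Finset.sum_congr rfl fun j _ => by ring

lemma F_sum {ι : Type*} (s : Finset ι) (Φ : ι → ZMod N → ℂ) (α : ZMod N) :
    F (fun j => ∑ p ∈ s, Φ p j) α = ∑ p ∈ s, F (Φ p) α := by
  simp only [F, Finset.mul_sum]
  rw [Finset.sum_comm]

lemma char_eq (α : ZMod N) :
    ZMod.stdAddChar α = (Real.cos (2 * Real.pi * α.val / N) : ℂ)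
      + (Real.sin (2 * Real.pi * α.val / N) : ℂ) * Complex.I := by
  rw [ZMod.stdAddChar_apply, ZMod.toCircle_apply]
  push_cast
  rw [show 2 * Real.pi * Complex.I * (α.val : ℂ) / N
      = ((2 * Real.pi * α.val / N : ℝ) : ℂ) * Complex.I by push_cast; ring]
  rw [Complex.exp_mul_I]
  push_cast
  ring_nf

lemma char_neg_eq (α : ZMod N) :
    ZMod.stdAddChar (-α) = (Real.cos (2 * Real.pi * α.val / N) : ℂ)
      - (Real.sin (2 * Real.pi * α.val / N) : ℂ) * Complex.I := by
  rw [← conj_char, char_eq]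
  rw [map_add, RingHom.map_mul]
  simp only [Complex.conj_ofReal, Complex.conj_I]
  ring

lemma specNorm_nonneg {m : ℕ} (A : Matrix (Fin m) (Fin m) ℝ) : 0 ≤ specNorm A :=
  norm_nonneg _

lemma mulVec_sq_le {m : ℕ} (A : Matrix (Fin m) (Fin m) ℝ) (x : Fin m → ℝ) :
    ∑ ℓ, (A.mulVec x ℓ) ^ 2 ≤ specNorm A ^ 2 * ∑ ℓ, (x ℓ) ^ 2 := by
  set X : EuclideanSpace ℝ (Fin m) := (WithLp.equiv 2 _).symm x with hX
  have happ : (Matrix.toEuclideanCLM (𝕜 := ℝ) A) X = (WithLp.equiv 2 _).symm (A.mulVec x) := by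
    rw [show ((Matrix.toEuclideanCLM (𝕜 := ℝ) A) X : EuclideanSpace ℝ (Fin m))
        = Matrix.toEuclideanLin A X from rfl]
    rw [Matrix.toEuclideanLin_apply]
    rfl
  have h := (Matrix.toEuclideanCLM (𝕜 := ℝ) A).le_opNorm X
  rw [happ] at h
  have h2 := pow_le_pow_left₀ (norm_nonneg _) h 2
  have e1 : ‖(WithLp.equiv 2 (Fin m → ℝ)).symm (A.mulVec x)‖ ^ 2 = ∑ ℓ, (A.mulVec x ℓ) ^ 2 := by
    rw [EuclideanSpace.norm_eq, Real.sq_sqrt (by positivity)]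
    simp [sq_abs]
  have e2 : ‖X‖ ^ 2 = ∑ ℓ, (x ℓ) ^ 2 := by
    rw [hX, EuclideanSpace.norm_eq, Real.sq_sqrt (by positivity)]
    simp [sq_abs]
  rw [e1] at h2
  calc ∑ ℓ, (A.mulVec x ℓ) ^ 2 ≤ (specNorm A * ‖X‖) ^ 2 := h2
    _ = specNorm A ^ 2 * ∑ ℓ, (x ℓ) ^ 2 := by rw [mul_pow, e2]

lemma mulVecC_sq_le {m : ℕ} (A : Matrix (Fin m) (Fin m) ℝ) (a : Fin m → ℂ) :
    ∑ ℓ, Complex.normSq (∑ p, (A ℓ p : ℂ) * a p)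
      ≤ specNorm A ^ 2 * ∑ ℓ, Complex.normSq (a ℓ) := by
  have hre : ∀ ℓ, (∑ p, (A ℓ p : ℂ) * a p).re = A.mulVec (fun p => (a p).re) ℓ := by
    intro ℓ
    rw [Complex.re_sum]
    exact Finset.sum_congr rfl fun p _ => by simp [Matrix.mulVec, dotProduct]
  have him : ∀ ℓ, (∑ p, (A ℓ p : ℂ) * a p).im = A.mulVec (fun p => (a p).im) ℓ := by
    intro ℓ
    rw [Complex.im_sum]
    exact Finset.sum_congr rfl fun p _ => by simp [Matrix.mulVec, dotProduct]
  have lhs : ∑ ℓ, Complex.normSq (∑ p, (A ℓ p : ℂ) * a p)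
      = ∑ ℓ, (A.mulVec (fun p => (a p).re) ℓ) ^ 2
        + ∑ ℓ, (A.mulVec (fun p => (a p).im) ℓ) ^ 2 := by
    rw [← Finset.sum_add_distrib]
    refine Finset.sum_congr rfl fun ℓ _ => ?_
    rw [Complex.normSq_apply, hre, him]; ring
  have rhs : ∑ ℓ, Complex.normSq (a ℓ) = ∑ ℓ, ((a ℓ).re) ^ 2 + ∑ ℓ, ((a ℓ).im) ^ 2 := by
    rw [← Finset.sum_add_distrib]
    refine Finset.sum_congr rfl fun ℓ _ => ?_
    rw [Complex.normSq_apply]; ring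
  rw [lhs, rhs, mul_add]
  exact add_le_add (mulVec_sq_le A _) (mulVec_sq_le A _)

lemma perAlpha {m : ℕ} (A : Matrix (Fin m) (Fin m) ℝ) (hA : A.IsSymm) (CR KR : ℝ)
    (a : Fin m → ℂ) :
    ∑ ℓ, Complex.normSq ((CR : ℂ) * a ℓ + (KR : ℂ) * Complex.I * ∑ p, (A ℓ p : ℂ) * a p)
      ≤ (CR ^ 2 + KR ^ 2 * specNorm A ^ 2) * ∑ ℓ, Complex.normSq (a ℓ) := by
  set b : Fin m → ℂ := fun ℓ => ∑ p, (A ℓ p : ℂ) * a p with hb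
  have hT : ∑ ℓ, b ℓ * (starRingEnd ℂ) (a ℓ) = ∑ ℓ, a ℓ * (starRingEnd ℂ) (b ℓ) := by
    have h1 : ∀ ℓ, b ℓ * (starRingEnd ℂ) (a ℓ)
        = ∑ p, (A ℓ p : ℂ) * (a p * (starRingEnd ℂ) (a ℓ)) := by
      intro ℓ
      rw [hb, Finset.sum_mul]
      exact Finset.sum_congr rfl fun p _ => by ring
    have h2 : ∀ ℓ, a ℓ * (starRingEnd ℂ) (b ℓ)
        = ∑ p, (A ℓ p : ℂ) * (a ℓ * (starRingEnd ℂ) (a p)) := by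
      intro ℓ
      rw [hb, map_sum, Finset.mul_sum]
      refine Finset.sum_congr rfl fun p _ => ?_
      rw [map_mul (starRingEnd ℂ), Complex.conj_ofReal]
      ring
    simp_rw [h1, h2]
    rw [Finset.sum_comm]
    refine Finset.sum_congr rfl fun p _ => Finset.sum_congr rfl fun ℓ _ => ?_
    rw [hA.apply ℓ p]
  have hconj : ∀ z w : ℂ, (starRingEnd ℂ) ((CR : ℂ) * z + (KR : ℂ) * Complex.I * w)
      = (CR : ℂ) * (starRingEnd ℂ) z - (KR : ℂ) * Complex.I * (starRingEnd ℂ) w := by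
    intro z w
    rw [map_add, map_mul (starRingEnd ℂ), map_mul (starRingEnd ℂ), map_mul (starRingEnd ℂ)]
    simp only [Complex.conj_ofReal, Complex.conj_I]
    ring
  have hpt : ∀ ℓ : Fin m,
      ((CR : ℂ) * a ℓ + (KR : ℂ) * Complex.I * b ℓ) *
        (starRingEnd ℂ) ((CR : ℂ) * a ℓ + (KR : ℂ) * Complex.I * b ℓ)
      = (CR : ℂ) ^ 2 * (a ℓ * (starRingEnd ℂ) (a ℓ))
        + (KR : ℂ) ^ 2 * (b ℓ * (starRingEnd ℂ) (b ℓ))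
        + (CR : ℂ) * (KR : ℂ) * Complex.I *
            (b ℓ * (starRingEnd ℂ) (a ℓ) - a ℓ * (starRingEnd ℂ) (b ℓ)) := by
    intro ℓ
    rw [hconj]
    have : Complex.I * Complex.I = -1 := Complex.I_mul_I
    ring_nf
    rw [Complex.I_sq]
    ring
  have hsumC : ∑ ℓ, ((CR : ℂ) * a ℓ + (KR : ℂ) * Complex.I * b ℓ) *
        (starRingEnd ℂ) ((CR : ℂ) * a ℓ + (KR : ℂ) * Complex.I * b ℓ)
      = (CR : ℂ) ^ 2 * ∑ ℓ, (a ℓ * (starRingEnd ℂ) (a ℓ))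
        + (KR : ℂ) ^ 2 * ∑ ℓ, (b ℓ * (starRingEnd ℂ) (b ℓ)) := by
    simp_rw [hpt]
    rw [Finset.sum_add_distrib, Finset.sum_add_distrib, ← Finset.mul_sum, ← Finset.mul_sum,
      ← Finset.mul_sum, Finset.sum_sub_distrib, hT, sub_self, mul_zero, add_zero]
  have hsumR : ∑ ℓ, Complex.normSq ((CR : ℂ) * a ℓ + (KR : ℂ) * Complex.I * b ℓ)
      = CR ^ 2 * ∑ ℓ, Complex.normSq (a ℓ) + KR ^ 2 * ∑ ℓ, Complex.normSq (b ℓ) := by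
    have := hsumC
    simp_rw [Complex.mul_conj] at this
    exact_mod_cast this
  rw [hsumR]
  have hbd := mulVecC_sq_le A a
  have hKR : 0 ≤ KR ^ 2 := sq_nonneg _
  nlinarith [hbd, hKR]

def toF {k : ℕ} : ZMod (k+1) → Fin (k+1) := fun x => x

noncomputable def colC {k m : ℕ} (w : Matrix (Fin (k+1)) (Fin m) ℝ) (ℓ : Fin m) :
    ZMod (k+1) → ℂ :=
  fun j => ((w (toF j) ℓ : ℝ) : ℂ)

end StabAux

/- Stability bound for the split streaming-scattering update: Lax-Friedrichs streaming
step followed by an explicit Euler step for the diagonal scattering matrix G. -/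
theorem stmt5 (n m : ℕ) [NeZero n] [NeZero m] (Δt Δx : ℝ) (hΔt : 0 < Δt) (hΔx : 0 < Δx)
    (A : Matrix (Fin m) (Fin m) ℝ) (hA : A.IsSymm)
    (c : ℝ) (hc : c = specNorm A * Δt / Δx)
    (G : Matrix (Fin m) (Fin m) ℝ) (hG : G.IsDiag)
    (u : Matrix (Fin n) (Fin m) ℝ) :
    frob ((L1 n * u - L2 n Δt Δx * u * Aᵀ) * (1 + Δt • G))
      ≤ (Finset.univ.sup' Finset.univ_nonempty (fun ℓ : Fin m => |1 + Δt * G ℓ ℓ|))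
        * ((Finset.Icc 1 n).sup'
            (Finset.nonempty_Icc.mpr (Nat.one_le_iff_ne_zero.mpr (NeZero.ne n)))
            (fun α : ℕ =>
              Real.sqrt (Real.cos (2 * π * α / n) ^ 2 + c ^ 2 * Real.sin (2 * π * α / n) ^ 2)))
        * frob u := by
  obtain ⟨k, rfl⟩ : ∃ k, n = k + 1 :=
    ⟨n - 1, (Nat.succ_pred_eq_of_pos (Nat.pos_of_ne_zero (NeZero.ne n))).symm⟩
  set M := L1 (k+1) * u - L2 (k+1) Δt Δx * u * Aᵀ with hMdef
  set g := Finset.univ.sup' Finset.univ_nonempty (fun ℓ : Fin m => |1 + Δt * G ℓ ℓ|) with hgdef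
  set K := (Finset.Icc 1 (k+1)).sup'
      (Finset.nonempty_Icc.mpr (Nat.one_le_iff_ne_zero.mpr (NeZero.ne (k+1))))
      (fun α : ℕ => Real.sqrt (Real.cos (2 * π * α / ((k+1 : ℕ) : ℝ)) ^ 2
        + c ^ 2 * Real.sin (2 * π * α / ((k+1 : ℕ) : ℝ)) ^ 2)) with hKdef
  have hg0 : 0 ≤ g := by
    rw [hgdef]
    exact le_trans (abs_nonneg (1 + Δt * G 0 0))
      (Finset.le_sup' (fun ℓ : Fin m => |1 + Δt * G ℓ ℓ|) (Finset.mem_univ (0 : Fin m)))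
  have hK0 : 0 ≤ K := by
    rw [hKdef]
    exact le_trans (Real.sqrt_nonneg _)
      (Finset.le_sup' (fun α : ℕ => Real.sqrt (Real.cos (2 * π * α / ((k+1 : ℕ) : ℝ)) ^ 2
          + c ^ 2 * Real.sin (2 * π * α / ((k+1 : ℕ) : ℝ)) ^ 2))
        (Finset.mem_Icc.mpr ⟨Nat.le_add_left 1 k, le_refl (k+1)⟩))
  have claim1 : frob (M * (1 + Δt • G)) ≤ g * frob M := by
    set P : Matrix (Fin (k+1)) (Fin m) ℝ := M * (1 + Δt • G) with hP
    have hent : ∀ (i : Fin (k+1)) (ℓ : Fin m),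
        P i ℓ = M i ℓ * (1 + Δt * G ℓ ℓ) := by
      intro i ℓ
      rw [hP, Matrix.mul_apply, Finset.sum_eq_single ℓ]
      · simp [Matrix.add_apply, Matrix.one_apply_eq, Matrix.smul_apply, smul_eq_mul]
      · intro p _ hp
        have hGp : G p ℓ = 0 := hG hp
        simp [Matrix.add_apply, Matrix.one_apply_ne hp, Matrix.smul_apply, hGp]
      · intro h
        exact absurd (Finset.mem_univ ℓ) h
    have habs : ∀ ℓ : Fin m, (1 + Δt * G ℓ ℓ) ^ 2 ≤ g ^ 2 := by
      intro ℓ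
      have h1 : |1 + Δt * G ℓ ℓ| ≤ g := by
        rw [hgdef]
        exact Finset.le_sup' (fun ℓ : Fin m => |1 + Δt * G ℓ ℓ|) (Finset.mem_univ ℓ)
      calc (1 + Δt * G ℓ ℓ) ^ 2 = |1 + Δt * G ℓ ℓ| ^ 2 := (sq_abs _).symm
        _ ≤ g ^ 2 := pow_le_pow_left₀ (abs_nonneg _) h1 2
    have hsum : ∑ i, ∑ ℓ, (P i ℓ) ^ 2 ≤ g ^ 2 * ∑ i, ∑ ℓ, (M i ℓ) ^ 2 := by
      rw [Finset.mul_sum]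
      refine Finset.sum_le_sum fun i _ => ?_
      rw [Finset.mul_sum]
      refine Finset.sum_le_sum fun ℓ _ => ?_
      rw [hent]
      calc (M i ℓ * (1 + Δt * G ℓ ℓ)) ^ 2 = (1 + Δt * G ℓ ℓ) ^ 2 * (M i ℓ) ^ 2 := by ring
        _ ≤ g ^ 2 * (M i ℓ) ^ 2 := mul_le_mul_of_nonneg_right (habs ℓ) (sq_nonneg _)
    calc frob P = Real.sqrt (∑ i, ∑ ℓ, (P i ℓ) ^ 2) := rfl
      _ ≤ Real.sqrt (g ^ 2 * ∑ i, ∑ ℓ, (M i ℓ) ^ 2) := Real.sqrt_le_sqrt hsum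
      _ = g * frob M := by
          rw [Real.sqrt_mul (sq_nonneg g), Real.sqrt_sq hg0, frob]
  have claim2 : frob M ≤ K * frob u := by
    set s : ℝ := Δt / (2 * Δx) with hs
    have hMfin : ∀ (j : Fin (k+1)) (ℓ : Fin m),
        M j ℓ = (1/2) * u (j+1) ℓ + (1/2) * u (j-1) ℓ
          - ∑ p, (s * u (j+1) p - s * u (j-1) p) * A ℓ p := by
      intro j ℓ
      have h1 : (L1 (k+1) * u) j ℓ = (1/2) * u (j+1) ℓ + (1/2) * u (j-1) ℓ := by
        rw [Matrix.mul_apply]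
        simp [L1, add_mul, ite_mul, Finset.sum_add_distrib]
      have h2 : ∀ p, (L2 (k+1) Δt Δx * u) j p = s * u (j+1) p - s * u (j-1) p := by
        intro p
        rw [Matrix.mul_apply]
        simp [L2, hs, add_mul, ite_mul, Finset.sum_add_distrib, sub_eq_add_neg]
      have h3 : (L2 (k+1) Δt Δx * u * Aᵀ) j ℓ
          = ∑ p, (s * u (j+1) p - s * u (j-1) p) * A ℓ p := by
        rw [Matrix.mul_apply]
        exact Finset.sum_congr rfl fun p _ => by rw [h2, Matrix.transpose_apply]
      rw [hMdef, Matrix.sub_apply, h1, h3]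
    have hMent : ∀ (j : ZMod (k+1)) (ℓ : Fin m),
        M (StabAux.toF j) ℓ = (1/2) * u (StabAux.toF (j+1)) ℓ + (1/2) * u (StabAux.toF (j-1)) ℓ
          - ∑ p, (s * u (StabAux.toF (j+1)) p - s * u (StabAux.toF (j-1)) p) * A ℓ p :=
      fun j ℓ => hMfin (StabAux.toF j) ℓ
    have hMcfun : ∀ ℓ : Fin m, StabAux.colC M ℓ = fun j : ZMod (k+1) =>
        (1/2 : ℂ) * StabAux.colC u ℓ (j + 1) + (1/2 : ℂ) * StabAux.colC u ℓ (j - 1)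
          - ∑ p, ((A ℓ p : ℝ) : ℂ) *
              (((s : ℝ) : ℂ) * StabAux.colC u p (j + 1)
                - ((s : ℝ) : ℂ) * StabAux.colC u p (j - 1)) := by
      intro ℓ
      funext j
      simp only [StabAux.colC]
      rw [hMent j ℓ]
      push_cast
      congr 1
      refine Finset.sum_congr rfl fun p _ => ?_
      ring
    have hΔx' : Δx ≠ 0 := ne_of_gt hΔx
    have hsym : ∀ (ℓ : Fin m) (α : ZMod (k+1)),
        StabAux.F (StabAux.colC M ℓ) α
          = ((Real.cos (2 * π * (α.val : ℝ) / ((k+1 : ℕ) : ℝ)) : ℝ) : ℂ)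
              * StabAux.F (StabAux.colC u ℓ) α
            + ((Δt / Δx * Real.sin (2 * π * (α.val : ℝ) / ((k+1 : ℕ) : ℝ)) : ℝ) : ℂ) * Complex.I
              * ∑ p, ((A ℓ p : ℝ) : ℂ) * StabAux.F (StabAux.colC u p) α := by
      intro ℓ α
      rw [hMcfun ℓ]
      simp only [StabAux.F_sub, StabAux.F_add, StabAux.F_cmul, StabAux.F_sum,
        StabAux.F_shift, StabAux.F_shift']
      rw [StabAux.char_eq α, StabAux.char_neg_eq α]
      have h2s : (Δt / Δx * Real.sin (2 * π * (α.val : ℝ) / ((k+1 : ℕ) : ℝ)) : ℝ)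
          = 2 * s * Real.sin (2 * π * (α.val : ℝ) / ((k+1 : ℕ) : ℝ)) := by
        rw [hs]
        field_simp
      rw [h2s]
      have hterm : ∀ p : Fin m, ((A ℓ p : ℝ) : ℂ) *
            (((s : ℝ) : ℂ) * ((((Real.cos (2 * π * (α.val : ℝ) / ((k+1 : ℕ) : ℝ)) : ℝ) : ℂ)
                - ((Real.sin (2 * π * (α.val : ℝ) / ((k+1 : ℕ) : ℝ)) : ℝ) : ℂ) * Complex.I)
                * StabAux.F (StabAux.colC u p) α)
              - ((s : ℝ) : ℂ) * ((((Real.cos (2 * π * (α.val : ℝ) / ((k+1 : ℕ) : ℝ)) : ℝ) : ℂ)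
                + ((Real.sin (2 * π * (α.val : ℝ) / ((k+1 : ℕ) : ℝ)) : ℝ) : ℂ) * Complex.I)
                * StabAux.F (StabAux.colC u p) α))
          = -(((2 * s * Real.sin (2 * π * (α.val : ℝ) / ((k+1 : ℕ) : ℝ)) : ℝ) : ℂ) * Complex.I
              * (((A ℓ p : ℝ) : ℂ) * StabAux.F (StabAux.colC u p) α)) := by
        intro p
        push_cast
        ring
      simp_rw [hterm]
      rw [Finset.sum_neg_distrib, ← Finset.mul_sum]
      push_cast
      ring
    have hcoef : ∀ α : ZMod (k+1),
        Real.cos (2 * π * (α.val : ℝ) / ((k+1 : ℕ) : ℝ)) ^ 2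
          + (Δt / Δx * Real.sin (2 * π * (α.val : ℝ) / ((k+1 : ℕ) : ℝ))) ^ 2 * specNorm A ^ 2
          ≤ K ^ 2 := by
      intro α
      have hval : (Δt / Δx * Real.sin (2 * π * (α.val : ℝ) / ((k+1 : ℕ) : ℝ))) ^ 2
            * specNorm A ^ 2
          = c ^ 2 * Real.sin (2 * π * (α.val : ℝ) / ((k+1 : ℕ) : ℝ)) ^ 2 := by
        rw [hc]
        field_simp
      set β : ℕ := (if α.val = 0 then (k+1) else α.val) with hβ
      have hβmem : β ∈ Finset.Icc 1 (k+1) := by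
        rw [Finset.mem_Icc, hβ]
        have := ZMod.val_lt α
        split <;> omega
      have hangle : Real.cos (2 * π * (β : ℝ) / ((k+1 : ℕ) : ℝ)) ^ 2
            + c ^ 2 * Real.sin (2 * π * (β : ℝ) / ((k+1 : ℕ) : ℝ)) ^ 2
          = Real.cos (2 * π * (α.val : ℝ) / ((k+1 : ℕ) : ℝ)) ^ 2
            + c ^ 2 * Real.sin (2 * π * (α.val : ℝ) / ((k+1 : ℕ) : ℝ)) ^ 2 := by
        rw [hβ]
        split_ifs with h0
        · have hN : ((k+1 : ℕ) : ℝ) ≠ 0 := by positivity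
          rw [h0]
          rw [show 2 * π * (((k+1 : ℕ) : ℕ) : ℝ) / ((k+1 : ℕ) : ℝ) = 2 * π by field_simp]
          simp [Real.cos_two_pi, Real.sin_two_pi]
        · rfl
      have hnn : 0 ≤ Real.cos (2 * π * (β : ℝ) / ((k+1 : ℕ) : ℝ)) ^ 2
          + c ^ 2 * Real.sin (2 * π * (β : ℝ) / ((k+1 : ℕ) : ℝ)) ^ 2 := by positivity
      have hle : Real.sqrt (Real.cos (2 * π * (β : ℝ) / ((k+1 : ℕ) : ℝ)) ^ 2
          + c ^ 2 * Real.sin (2 * π * (β : ℝ) / ((k+1 : ℕ) : ℝ)) ^ 2) ≤ K := by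
        rw [hKdef]
        exact Finset.le_sup' (fun α : ℕ => Real.sqrt (Real.cos (2 * π * α / ((k+1 : ℕ) : ℝ)) ^ 2
          + c ^ 2 * Real.sin (2 * π * α / ((k+1 : ℕ) : ℝ)) ^ 2)) hβmem
      calc Real.cos (2 * π * (α.val : ℝ) / ((k+1 : ℕ) : ℝ)) ^ 2
            + (Δt / Δx * Real.sin (2 * π * (α.val : ℝ) / ((k+1 : ℕ) : ℝ))) ^ 2 * specNorm A ^ 2
          = Real.cos (2 * π * (α.val : ℝ) / ((k+1 : ℕ) : ℝ)) ^ 2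
            + c ^ 2 * Real.sin (2 * π * (α.val : ℝ) / ((k+1 : ℕ) : ℝ)) ^ 2 := by rw [hval]
        _ = Real.cos (2 * π * (β : ℝ) / ((k+1 : ℕ) : ℝ)) ^ 2
            + c ^ 2 * Real.sin (2 * π * (β : ℝ) / ((k+1 : ℕ) : ℝ)) ^ 2 := hangle.symm
        _ = Real.sqrt (Real.cos (2 * π * (β : ℝ) / ((k+1 : ℕ) : ℝ)) ^ 2
            + c ^ 2 * Real.sin (2 * π * (β : ℝ) / ((k+1 : ℕ) : ℝ)) ^ 2) ^ 2 :=
              (Real.sq_sqrt hnn).symm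
        _ ≤ K ^ 2 := pow_le_pow_left₀ (Real.sqrt_nonneg _) hle 2
    have hPM : ∑ α : ZMod (k+1), ∑ ℓ, Complex.normSq (StabAux.F (StabAux.colC M ℓ) α)
        = ((k+1 : ℕ) : ℝ) * ∑ i, ∑ ℓ, (M i ℓ) ^ 2 := by
      rw [Finset.sum_comm]
      have h1 : ∀ ℓ : Fin m, ∑ α : ZMod (k+1), Complex.normSq (StabAux.F (StabAux.colC M ℓ) α)
          = ((k+1 : ℕ) : ℝ) * ∑ j : ZMod (k+1), Complex.normSq (StabAux.colC M ℓ j) :=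
        fun ℓ => StabAux.parseval (StabAux.colC M ℓ)
      simp_rw [h1]
      rw [← Finset.mul_sum]
      congr 1
      rw [Finset.sum_comm]
      refine Fintype.sum_equiv ⟨StabAux.toF, fun j => j, fun _ => rfl, fun _ => rfl⟩
        _ _ fun j => ?_
      refine Finset.sum_congr rfl fun ℓ _ => ?_
      show Complex.normSq ((M (StabAux.toF j) ℓ : ℝ) : ℂ) = (M (StabAux.toF j) ℓ) ^ 2
      rw [Complex.normSq_ofReal]
      exact (pow_two _).symm
    have hPu : ∑ α : ZMod (k+1), ∑ ℓ, Complex.normSq (StabAux.F (StabAux.colC u ℓ) α)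
        = ((k+1 : ℕ) : ℝ) * ∑ i, ∑ ℓ, (u i ℓ) ^ 2 := by
      rw [Finset.sum_comm]
      have h1 : ∀ ℓ : Fin m, ∑ α : ZMod (k+1), Complex.normSq (StabAux.F (StabAux.colC u ℓ) α)
          = ((k+1 : ℕ) : ℝ) * ∑ j : ZMod (k+1), Complex.normSq (StabAux.colC u ℓ j) :=
        fun ℓ => StabAux.parseval (StabAux.colC u ℓ)
      simp_rw [h1]
      rw [← Finset.mul_sum]
      congr 1
      rw [Finset.sum_comm]
      refine Fintype.sum_equiv ⟨StabAux.toF, fun j => j, fun _ => rfl, fun _ => rfl⟩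
        _ _ fun j => ?_
      refine Finset.sum_congr rfl fun ℓ _ => ?_
      show Complex.normSq ((u (StabAux.toF j) ℓ : ℝ) : ℂ) = (u (StabAux.toF j) ℓ) ^ 2
      rw [Complex.normSq_ofReal]
      exact (pow_two _).symm
    have hsum : ∑ α : ZMod (k+1), ∑ ℓ, Complex.normSq (StabAux.F (StabAux.colC M ℓ) α)
        ≤ K ^ 2 * ∑ α : ZMod (k+1), ∑ ℓ, Complex.normSq (StabAux.F (StabAux.colC u ℓ) α) := by
      rw [Finset.mul_sum]
      refine Finset.sum_le_sum fun α _ => ?_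
      simp_rw [hsym]
      refine le_trans (StabAux.perAlpha A hA _ _ (fun p => StabAux.F (StabAux.colC u p) α)) ?_
      exact mul_le_mul_of_nonneg_right (hcoef α)
        (Finset.sum_nonneg fun ℓ _ => Complex.normSq_nonneg _)
    have hNpos : (0 : ℝ) < ((k+1 : ℕ) : ℝ) := by positivity
    have hfin : ∑ i, ∑ ℓ, (M i ℓ) ^ 2 ≤ K ^ 2 * ∑ i, ∑ ℓ, (u i ℓ) ^ 2 := by
      have h := hsum
      rw [hPM, hPu] at h
      rw [show K ^ 2 * (((k+1 : ℕ) : ℝ) * ∑ i, ∑ ℓ, (u i ℓ) ^ 2)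
          = ((k+1 : ℕ) : ℝ) * (K ^ 2 * ∑ i, ∑ ℓ, (u i ℓ) ^ 2) by ring] at h
      exact le_of_mul_le_mul_left h hNpos
    have h1 : frob M ^ 2 ≤ (K * frob u) ^ 2 := by
      rw [frob, frob, Real.sq_sqrt (by positivity), mul_pow, Real.sq_sqrt (by positivity)]
      exact hfin
    have hfM : 0 ≤ frob M := Real.sqrt_nonneg _
    have hfu : 0 ≤ frob u := Real.sqrt_nonneg _
    have h2 := Real.sqrt_le_sqrt h1
    rwa [Real.sqrt_sq hfM, Real.sqrt_sq (mul_nonneg hK0 hfu)] at h2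
  calc frob (M * (1 + Δt • G)) ≤ g * frob M := claim1
    _ ≤ g * (K * frob u) := mul_le_mul_of_nonneg_left claim2 hg0
    _ = g * K * frob u := (mul_assoc _ _ _).symm
end

section
/- (Instability of the projector-splitting integrator applied to the discretized problem.) Let n be a positive even integer, Δt, Δx > 0, and let L¹, L² ∈ ℝ^{n×n} be the circulant matrices with entries (indices modulo n) L¹_{j,j±1} = 1/2 and L²_{j,j±1} = ±Δt/(2Δx), all other entries zero. Let e ∈ ℝⁿ be the alternating vector with e_j = (−1)^j, let w ∈ ℝ^m with ‖w‖₂ = 1, let A ∈ ℝ^{m×m} be symmetric, and set u = e wᵀ and P = (1/n)·e eᵀ. Then L¹ e = −e and L² e = 0, and the three substeps of the projector-splitting integrator, namely u_I = (L¹ u − L² u Aᵀ) w wᵀ, u_II = −P((L¹ − 2I) u_I − L² u_I Aᵀ) w wᵀ, and u_III = P(L¹ u_II − L² u_II Aᵀ), satisfy u_I = −e wᵀ, u_II = −3 e wᵀ, and u_III = 3 e wᵀ. In particular ‖u_III‖_F = 3‖u‖_F, so the projector-splitting integrator applied to the Lax–Friedrichs discretization of ∂_t u = −A ∂_x u amplifies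 the Frobenius norm of this mode by the factor 3, independently of the time step size; hence the scheme is L²-unstable. -/
open Matrix
open scoped Real

/- Instability of the projector-splitting integrator applied to the Lax-Friedrichs
discretization: for the alternating mode u = e wᵀ (n even) the three substeps give
u_I = −e wᵀ, u_II = −3 e wᵀ, u_III = 3 e wᵀ, amplifying the Frobenius norm by 3. -/
lemma mul_vmv {n m : ℕ} (M : Matrix (Fin n) (Fin n) ℝ) (v : Fin n → ℝ) (w : Fin m → ℝ) :
    M * Matrix.vecMulVec v w = Matrix.vecMulVec (M.mulVec v) w := by
  ext i j
  simp [Matrix.mul_apply, Matrix.vecMulVec_apply, Matrix.mulVec, dotProduct,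
    Finset.sum_mul, mul_assoc]

lemma vmv_mul {n k m : ℕ} (v : Fin n → ℝ) (w : Fin k → ℝ) (N : Matrix (Fin k) (Fin m) ℝ) :
    Matrix.vecMulVec v w * N = Matrix.vecMulVec v (Matrix.vecMul w N) := by
  ext i j
  simp [Matrix.mul_apply, Matrix.vecMulVec_apply, Matrix.vecMul, dotProduct,
    Finset.mul_sum, mul_assoc]

lemma neg_vmv {n m : ℕ} (v : Fin n → ℝ) (w : Fin m → ℝ) :
    Matrix.vecMulVec (-v) w = -Matrix.vecMulVec v w := by
  ext i j; simp [Matrix.vecMulVec_apply]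

lemma zero_vmv {n m : ℕ} (w : Fin m → ℝ) :
    Matrix.vecMulVec (0 : Fin n → ℝ) w = 0 := by
  ext i j; simp [Matrix.vecMulVec_apply]

lemma smul_vmv₂ {n m : ℕ} (c : ℝ) (v : Fin n → ℝ) (w : Fin m → ℝ) :
    Matrix.vecMulVec v (c • w) = c • Matrix.vecMulVec v w := by
  ext i j; simp [Matrix.vecMulVec_apply]; ring

lemma pow_mod_even {n : ℕ} (hn : Even n) (x : ℕ) : (-1 : ℝ) ^ (x % n) = (-1) ^ x := by
  conv_rhs => rw [← Nat.mod_add_div x n]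
  rw [pow_add, pow_mul, hn.neg_one_pow, one_pow, mul_one]

theorem stmt6 (n m : ℕ) [NeZero n] (hn : Even n) (Δt Δx : ℝ) (hΔt : 0 < Δt) (hΔx : 0 < Δx)
    (A : Matrix (Fin m) (Fin m) ℝ) (hA : A.IsSymm)
    (w : Fin m → ℝ) (hw : ∑ k, w k ^ 2 = 1)
    (e : Fin n → ℝ) (he : ∀ j, e j = (-1 : ℝ) ^ (j : ℕ))
    (u uI uII uIII : Matrix (Fin n) (Fin m) ℝ) (P : Matrix (Fin n) (Fin n) ℝ)
    (hu : u = Matrix.vecMulVec e w)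
    (hP : P = (1 / (n : ℝ)) • Matrix.vecMulVec e e)
    (huI : uI = (L1 n * u - L2 n Δt Δx * u * Aᵀ) * Matrix.vecMulVec w w)
    (huII : uII = -(P * ((L1 n - (2 : ℝ) • (1 : Matrix (Fin n) (Fin n) ℝ)) * uI
        - L2 n Δt Δx * uI * Aᵀ) * Matrix.vecMulVec w w))
    (huIII : uIII = P * (L1 n * uII - L2 n Δt Δx * uII * Aᵀ)) :
    (L1 n).mulVec e = -e ∧ (L2 n Δt Δx).mulVec e = 0 ∧
    uI = -u ∧ uII = (-3 : ℝ) • u ∧ uIII = (3 : ℝ) • u ∧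
    frob uIII = 3 * frob u := by

  -- e flips sign under shift
  have he1 : ∀ j : Fin n, e (j + 1) = -e j := by
    intro j
    rw [he, he, Fin.val_add, pow_mod_even hn, pow_add, Fin.val_one' n, pow_mod_even hn]
    norm_num
  have he2 : ∀ j : Fin n, e (j - 1) = -e j := by
    intro j
    have := he1 (j - 1)
    rw [sub_add_cancel] at this
    linarith
  have hL1e : (L1 n).mulVec e = -e := by
    funext j
    simp only [Matrix.mulVec, dotProduct, L1, Matrix.of_apply, add_mul, ite_mul,
      zero_mul, Finset.sum_add_distrib, Finset.sum_ite_eq', Finset.mem_univ, if_true,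
      Pi.neg_apply]
    rw [he1, he2]; ring
  have hL2e : (L2 n Δt Δx).mulVec e = 0 := by
    funext j
    simp only [Matrix.mulVec, dotProduct, L2, Matrix.of_apply, add_mul, ite_mul,
      zero_mul, Finset.sum_add_distrib, Finset.sum_ite_eq', Finset.mem_univ, if_true,
      Pi.zero_apply, neg_mul]
    rw [he1, he2]; ring
  have hsum_e : ∑ j, e j ^ 2 = (n : ℝ) := by
    have h1 : ∀ j : Fin n, e j ^ 2 = 1 := by
      intro j; rw [he, ← pow_mul, mul_comm, pow_mul]; norm_num
    simp [h1]
  have h1 : L1 n * u = -u := by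
    rw [hu, mul_vmv, hL1e, neg_vmv]
  have h2 : L2 n Δt Δx * u = 0 := by
    rw [hu, mul_vmv, hL2e, zero_vmv]
  have hvm : Matrix.vecMul w (Matrix.vecMulVec w w) = w := by
    funext j
    simp only [Matrix.vecMul, dotProduct, Matrix.vecMulVec_apply]
    calc ∑ k, w k * (w k * w j) = (∑ k, w k ^ 2) * w j := by
          rw [Finset.sum_mul]; exact Finset.sum_congr rfl fun k _ => by ring
      _ = w j := by rw [hw, one_mul]
  have huW : u * Matrix.vecMulVec w w = u := by
    rw [hu, vmv_mul, hvm]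
  have hPu : P * u = u := by
    rw [hP, hu, Matrix.smul_mul, vmv_mul]
    have hve : Matrix.vecMul e (Matrix.vecMulVec e w) = (n : ℝ) • w := by
      funext j
      simp only [Matrix.vecMul, dotProduct, Matrix.vecMulVec_apply, Pi.smul_apply,
        smul_eq_mul]
      calc ∑ k, e k * (e k * w j) = (∑ k, e k ^ 2) * w j := by
            rw [Finset.sum_mul]; exact Finset.sum_congr rfl fun k _ => by ring
        _ = (n : ℝ) * w j := by rw [hsum_e]
    rw [hve, smul_vmv₂, smul_smul]
    have hn0 : (n : ℝ) ≠ 0 := Nat.cast_ne_zero.mpr (NeZero.ne n)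
    rw [one_div, inv_mul_cancel₀ hn0, one_smul]
  have hI : uI = -u := by
    rw [huI, h1, h2, Matrix.zero_mul, sub_zero, Matrix.neg_mul, huW]
  have hII : uII = (-3 : ℝ) • u := by
    have hLI : (L1 n - (2 : ℝ) • (1 : Matrix (Fin n) (Fin n) ℝ)) * uI = (3 : ℝ) • u := by
      rw [hI, Matrix.sub_mul, Matrix.mul_neg, h1, neg_neg, Matrix.smul_mul, Matrix.one_mul]
      module
    have hL2I : L2 n Δt Δx * uI = 0 := by
      rw [hI, Matrix.mul_neg, h2, neg_zero]
    rw [huII, hLI, hL2I, Matrix.zero_mul, sub_zero, Matrix.mul_smul, hPu, Matrix.smul_mul,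
      huW]
    module
  have hIII : uIII = (3 : ℝ) • u := by
    rw [huIII, hII, Matrix.mul_smul, h1, Matrix.mul_smul, h2, smul_zero, Matrix.zero_mul,
      sub_zero, Matrix.mul_smul, Matrix.mul_neg, hPu]
    module
  refine ⟨hL1e, hL2e, hI, hII, hIII, ?_⟩
  rw [hIII]
  unfold frob
  have : ∑ i, ∑ j, ((3 : ℝ) • u) i j ^ 2 = 9 * ∑ i, ∑ j, u i j ^ 2 := by
    rw [Finset.mul_sum]
    refine Finset.sum_congr rfl fun i _ => ?_
    rw [Finset.mul_sum]
    exact Finset.sum_congr rfl fun j _ => by simp [Matrix.smul_apply]; ring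
  rw [this, show (9 : ℝ) = 3 ^ 2 by norm_num, Real.sqrt_mul (by positivity),
    Real.sqrt_sq (by norm_num)]
end

section
/- For all real numbers c and θ with c² ≤ 1/3, one has (1 + c² sin²θ)² · (cos²θ + c² sin²θ) ≤ 1. -/
/- Scalar bound for the squared amplification factor of one full step of the
projector-splitting integrator under the CFL condition c² ≤ 1/3. -/

theorem stmt8 (c θ : ℝ) (hc : c ^ 2 ≤ 1 / 3) :
    (1 + c ^ 2 * Real.sin θ ^ 2) ^ 2 * (Real.cos θ ^ 2 + c ^ 2 * Real.sin θ ^ 2) ≤ 1 := by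
  have hs : Real.sin θ ^ 2 + Real.cos θ ^ 2 = 1 := Real.sin_sq_add_cos_sq θ
  set s := Real.sin θ ^ 2 with hsdef
  have h0 : (0:ℝ) ≤ s := sq_nonneg _
  have hc0 : (0:ℝ) ≤ c ^ 2 := sq_nonneg _
  have hcos : Real.cos θ ^ 2 = 1 - s := by linarith
  rw [hcos]
  have h1 : (0:ℝ) ≤ s * (1 - 3 * c ^ 2) := mul_nonneg h0 (by linarith)
  have h2 : (0:ℝ) ≤ (s * s) * (c ^ 2 * (2 - 3 * c ^ 2)) :=
    mul_nonneg (mul_nonneg h0 h0) (mul_nonneg hc0 (by nlinarith))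
  have h3 : (0:ℝ) ≤ (s * s * s) * (c ^ 2 * c ^ 2 * (1 - c ^ 2)) :=
    mul_nonneg (mul_nonneg (mul_nonneg h0 h0) h0)
      (mul_nonneg (mul_nonneg hc0 hc0) (by nlinarith))
  nlinarith [h1, h2, h3]
end

section
/- (Theorem: stability of the unconventional integrator.) Let n be a positive integer, Δt, Δx > 0, and let L¹, L² ∈ ℝ^{n×n} be the circulant matrices with entries (indices modulo n) L¹_{j,j±1} = 1/2 and L²_{j,j±1} = ±Δt/(2Δx), all other entries zero. Let A ∈ ℝ^{m×m} be symmetric, let X⁰, X¹ ∈ ℝ^{n×r} and W⁰, W¹ ∈ ℝ^{m×r} all have orthonormal columns (X⁰ᵀX⁰ = X¹ᵀX¹ = W⁰ᵀW⁰ = W¹ᵀW¹ = I_r), and let S⁰ ∈ ℝ^{r×r}. Define M = X¹ᵀ X⁰, N = W¹ᵀ W⁰, ū = X¹ M S⁰ Nᵀ W¹ᵀ, and the updated coefficient matrix S¹ = X¹ᵀ(L¹ ū − L² ū Aᵀ) W¹. If the CFL condition λ_max(W¹ᵀ A W¹)·Δt/Δx ≤ 1 holds, then ‖X¹ S¹ W¹ᵀ‖_F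 ≤ ‖X⁰ S⁰ W⁰ᵀ‖_F; more precisely, with c̃ = λ_max(W¹ᵀ A W¹)·Δt/Δx, ‖X¹ S¹ W¹ᵀ‖_F ≤ (max over α ∈ {1,…,n} of √(cos²(2πα/n) + c̃² sin²(2πα/n))) · ‖X⁰ S⁰ W⁰ᵀ‖_F. -/
open Matrix
open scoped Real

noncomputable def frobSq {ι κ : Type*} [Fintype ι] [Fintype κ] (M : Matrix ι κ ℝ) : ℝ :=
  ∑ i, ∑ j, M i j ^ 2

section Frobenius

variable {ι κ μ : Type*} [Fintype ι] [Fintype κ] [Fintype μ]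

lemma frobSq_nonneg (M : Matrix ι κ ℝ) : 0 ≤ frobSq M :=
  Finset.sum_nonneg fun _ _ => Finset.sum_nonneg fun _ _ => sq_nonneg _

lemma frobSq_eq_trace (M : Matrix ι κ ℝ) : frobSq M = (Mᵀ * M).trace := by
  simp only [frobSq, trace, diag, mul_apply, transpose_apply, sq]
  exact Finset.sum_comm

lemma frobSq_transpose (M : Matrix ι κ ℝ) : frobSq Mᵀ = frobSq M :=
  Finset.sum_comm

lemma frobSq_mul_of_transpose_mul_self [DecidableEq κ] {X : Matrix ι κ ℝ} (hX : Xᵀ * X = 1)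
    (S : Matrix κ μ ℝ) : frobSq (X * S) = frobSq S := by
  rw [frobSq_eq_trace, frobSq_eq_trace, transpose_mul, Matrix.mul_assoc,
    ← Matrix.mul_assoc Xᵀ, hX, Matrix.one_mul]

lemma frobSq_mul_of_mul_transpose_self [DecidableEq κ] {V : Matrix κ μ ℝ} (hV : V * Vᵀ = 1)
    (T : Matrix ι κ ℝ) : frobSq (T * V) = frobSq T := by
  rw [← frobSq_transpose, transpose_mul, frobSq_mul_of_transpose_mul_self (by simpa using hV),
    frobSq_transpose]

lemma frobSq_transpose_mul_le [DecidableEq ι] [DecidableEq κ] {X : Matrix ι κ ℝ} (hX : Xᵀ * X = 1)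
    (T : Matrix ι μ ℝ) : frobSq (Xᵀ * T) ≤ frobSq T := by
  have hperp : frobSq ((1 - X * Xᵀ) * T) = frobSq T - frobSq (Xᵀ * T) := by
    have hXXT : Xᵀ * (X * (Xᵀ * T)) = Xᵀ * T := by
      rw [← Matrix.mul_assoc, hX, Matrix.one_mul]
    rw [frobSq_eq_trace, frobSq_eq_trace, frobSq_eq_trace, ← trace_sub]
    congr 1
    simp only [transpose_sub, transpose_mul, transpose_transpose, Matrix.sub_mul, Matrix.mul_sub,
      Matrix.one_mul, Matrix.mul_assoc, hXXT]
    abel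
  linarith [frobSq_nonneg ((1 - X * Xᵀ) * T)]

lemma frobSq_mul_le [DecidableEq κ] [DecidableEq μ] {W : Matrix κ μ ℝ} (hW : Wᵀ * W = 1)
    (T : Matrix ι κ ℝ) : frobSq (T * W) ≤ frobSq T := by
  rw [← frobSq_transpose, transpose_mul, ← frobSq_transpose T]
  exact frobSq_transpose_mul_le hW Tᵀ

end Frobenius

lemma sum_sq_convex_comb_perm_le {ι : Type*} [Fintype ι] (σ τ : Equiv.Perm ι) {a b : ℝ}
    (ha : 0 ≤ a) (hb : 0 ≤ b) (hab : a + b = 1) (z : ι → ℝ) :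
    ∑ i, (a * z (σ i) + b * z (τ i)) ^ 2 ≤ ∑ i, z i ^ 2 := by
  calc ∑ i, (a * z (σ i) + b * z (τ i)) ^ 2
      ≤ ∑ i, (a * z (σ i) ^ 2 + b * z (τ i) ^ 2) := by
        gcongr with i
        have hb' : b = 1 - a := by linarith
        subst hb'
        nlinarith [mul_nonneg (mul_nonneg ha hb) (sq_nonneg (z (σ i) - z (τ i)))]
    _ = a * ∑ i, z (σ i) ^ 2 + b * ∑ i, z (τ i) ^ 2 := by
        rw [Finset.sum_add_distrib, Finset.mul_sum, Finset.mul_sum]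
    _ = ∑ i, z i ^ 2 := by
        rw [Equiv.sum_comp σ (z · ^ 2), Equiv.sum_comp τ (z · ^ 2), ← add_mul, hab, one_mul]

section LaxFriedrichs

variable {n : ℕ} [NeZero n] {κ : Type*} [Fintype κ] [DecidableEq κ]

lemma laxFriedrichs_mul_diagonal_apply (Δt Δx : ℝ) (Z : Matrix (Fin n) κ ℝ) (d : κ → ℝ)
    (i : Fin n) (j : κ) :
    (L1 n * Z - L2 n Δt Δx * Z * diagonal d) i j
      = (1 - d j * Δt / Δx) / 2 * Z (i + 1) j + (1 + d j * Δt / Δx) / 2 * Z (i - 1) j := by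
  rw [Matrix.sub_apply, mul_diagonal, Matrix.mul_apply, Matrix.mul_apply]
  simp only [L1, L2, of_apply, add_mul, ite_mul, zero_mul, Finset.sum_add_distrib,
    Finset.sum_ite_eq', Finset.mem_univ, if_true]
  ring

lemma frobSq_laxFriedrichs_mul_diagonal_le {Δt Δx : ℝ} (Z : Matrix (Fin n) κ ℝ) {d : κ → ℝ}
    (hd : ∀ j, |d j * Δt / Δx| ≤ 1) :
    frobSq (L1 n * Z - L2 n Δt Δx * Z * diagonal d) ≤ frobSq Z := by
  rw [frobSq, frobSq, Finset.sum_comm, Finset.sum_comm (f := fun i j => Z i j ^ 2)]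
  refine Finset.sum_le_sum fun j _ => ?_
  obtain ⟨hlo, hhi⟩ := abs_le.mp (hd j)
  simp only [laxFriedrichs_mul_diagonal_apply]
  exact sum_sq_convex_comb_perm_le (Equiv.addRight 1) (Equiv.subRight 1)
    (by linarith) (by linarith) (by ring) (Z · j)

end LaxFriedrichs

lemma abs_eigenvalues_le_specNorm_s11 {r : ℕ} {B : Matrix (Fin r) (Fin r) ℝ} (hB : B.IsHermitian)
    (j : Fin r) : |hB.eigenvalues j| ≤ specNorm B := by
  have : Nonempty (Fin r) := ⟨j⟩
  have hmem : hB.eigenvalues j ∈ spectrum ℝ (toEuclideanCLM (𝕜 := ℝ) B) := by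
    rw [AlgEquiv.spectrum_eq]
    exact hB.eigenvalues_mem_spectrum_real j
  simpa [specNorm, Real.norm_eq_abs] using spectrum.norm_le_norm_of_mem hmem

lemma exists_orthogonal_diagonalization {r : ℕ} {B : Matrix (Fin r) (Fin r) ℝ}
    (hB : B.IsHermitian) :
    ∃ (U : Matrix (Fin r) (Fin r) ℝ) (d : Fin r → ℝ), U * Uᵀ = 1 ∧ Uᵀ * U = 1 ∧
      B = U * diagonal d * Uᵀ ∧ ∀ j, |d j| ≤ specNorm B := by
  have hU := hB.eigenvectorUnitary.2
  refine ⟨hB.eigenvectorUnitary, hB.eigenvalues, ?_, ?_, ?_, abs_eigenvalues_le_specNorm_s11 hB⟩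
  · simpa only [star_eq_conjTranspose, conjTranspose_eq_transpose_of_trivial]
      using mem_unitaryGroup_iff.mp hU
  · simpa only [star_eq_conjTranspose, conjTranspose_eq_transpose_of_trivial]
      using mem_unitaryGroup_iff'.mp hU
  · simpa only [Unitary.conjStarAlgAut_apply, star_eq_conjTranspose,
      conjTranspose_eq_transpose_of_trivial, RCLike.ofReal_real_eq_id, Function.id_comp]
      using hB.spectral_theorem

lemma frobSq_laxFriedrichs_mul_le {n r : ℕ} [NeZero n] {Δt Δx : ℝ} (hΔ : 0 ≤ Δt / Δx)
    (Z : Matrix (Fin n) (Fin r) ℝ) {B : Matrix (Fin r) (Fin r) ℝ} (hB : B.IsHermitian)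
    (hCFL : specNorm B * Δt / Δx ≤ 1) :
    frobSq (L1 n * Z - L2 n Δt Δx * (Z * B)) ≤ frobSq Z := by
  obtain ⟨U, d, hUUt, hUtU, rfl, hd⟩ := exists_orthogonal_diagonalization hB
  have hstep : L1 n * Z - L2 n Δt Δx * (Z * (U * diagonal d * Uᵀ))
      = (L1 n * (Z * U) - L2 n Δt Δx * (Z * U) * diagonal d) * Uᵀ := by
    simp only [Matrix.sub_mul, Matrix.mul_assoc, hUUt, Matrix.mul_one]
  have hcfl : ∀ j, |d j * Δt / Δx| ≤ 1 := fun j => by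
    rw [mul_div_assoc, abs_mul, abs_of_nonneg hΔ]
    calc |d j| * (Δt / Δx) ≤ specNorm (U * diagonal d * Uᵀ) * (Δt / Δx) := by
          gcongr; exact hd j
      _ ≤ 1 := by rwa [← mul_div_assoc]
  rw [hstep, frobSq_mul_of_mul_transpose_self (by rwa [transpose_transpose])]
  calc _ ≤ frobSq (Z * U) := frobSq_laxFriedrichs_mul_diagonal_le _ hcfl
    _ = frobSq Z := frobSq_mul_of_mul_transpose_self hUUt Z

lemma one_le_sup'_amplification (n : ℕ) [NeZero n] (c : ℝ) :
    1 ≤ (Finset.Icc 1 n).sup'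
      (Finset.nonempty_Icc.mpr (Nat.one_le_iff_ne_zero.mpr (NeZero.ne n)))
      (fun α : ℕ => √(Real.cos (2 * π * α / n) ^ 2 + c ^ 2 * Real.sin (2 * π * α / n) ^ 2)) := by
  refine le_trans (le_of_eq ?_) (Finset.le_sup' _ (Finset.right_mem_Icc.mpr NeZero.one_le))
  simp

theorem stmt11_general (n m r : ℕ) [NeZero n] (Δt Δx : ℝ) (hΔt : 0 < Δt) (hΔx : 0 < Δx)
    (A : Matrix (Fin m) (Fin m) ℝ) (hA : A.IsSymm)
    (X0 X1 : Matrix (Fin n) (Fin r) ℝ) (W0 W1 : Matrix (Fin m) (Fin r) ℝ)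
    (hX1 : X1ᵀ * X1 = 1) (hW1 : W1ᵀ * W1 = 1)
    (S0 : Matrix (Fin r) (Fin r) ℝ)
    (M N : Matrix (Fin r) (Fin r) ℝ) (hM : M = X1ᵀ * X0) (hN : N = W1ᵀ * W0)
    (ubar : Matrix (Fin n) (Fin m) ℝ) (hubar : ubar = X1 * M * S0 * Nᵀ * W1ᵀ)
    (S1 : Matrix (Fin r) (Fin r) ℝ)
    (hS1 : S1 = X1ᵀ * (L1 n * ubar - L2 n Δt Δx * ubar * Aᵀ) * W1)
    (ctilde : ℝ) (hctilde : ctilde = specNorm (W1ᵀ * A * W1) * Δt / Δx)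
    (hCFL : ctilde ≤ 1) :
    frob (X1 * S1 * W1ᵀ) ≤ frob (X0 * S0 * W0ᵀ) ∧
    frob (X1 * S1 * W1ᵀ)
      ≤ ((Finset.Icc 1 n).sup'
            (Finset.nonempty_Icc.mpr (Nat.one_le_iff_ne_zero.mpr (NeZero.ne n)))
            (fun α : ℕ =>
              Real.sqrt (Real.cos (2 * π * α / n) ^ 2 + ctilde ^ 2 * Real.sin (2 * π * α / n) ^ 2)))
        * frob (X0 * S0 * W0ᵀ) := by
  set C := X1ᵀ * (X0 * S0 * W0ᵀ) * W1
  have hAt : Aᵀ = A := hA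
  have hB : (W1ᵀ * A * W1).IsHermitian := by
    simpa using isHermitian_conjTranspose_mul_mul W1 (A := A) (by simpa [IsHermitian] using hAt)
  have hS1' : S1 = X1ᵀ * (L1 n * (X1 * C) - L2 n Δt Δx * (X1 * C * (W1ᵀ * A * W1))) := by
    have hubar' : ubar = X1 * C * W1ᵀ := by
      simp only [hubar, hM, hN, C, transpose_mul, transpose_transpose, Matrix.mul_assoc]
    simp only [hS1, hubar', hAt, Matrix.sub_mul, Matrix.mul_assoc, hW1, Matrix.mul_one]
  have hsq : frobSq (X1 * S1 * W1ᵀ) ≤ frobSq (X0 * S0 * W0ᵀ) := calc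
    frobSq (X1 * S1 * W1ᵀ) = frobSq S1 := by
      rw [Matrix.mul_assoc, frobSq_mul_of_transpose_mul_self hX1,
        frobSq_mul_of_mul_transpose_self (by rwa [transpose_transpose])]
    _ ≤ frobSq (X1 * C) := by
      rw [hS1']
      exact (frobSq_transpose_mul_le hX1 _).trans
        (frobSq_laxFriedrichs_mul_le (by positivity) _ hB (hctilde ▸ hCFL))
    _ = frobSq C := frobSq_mul_of_transpose_mul_self hX1 C
    _ ≤ frobSq (X0 * S0 * W0ᵀ) :=
      (frobSq_mul_le hW1 _).trans (frobSq_transpose_mul_le hX1 _)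
  have hfrob : frob (X1 * S1 * W1ᵀ) ≤ frob (X0 * S0 * W0ᵀ) := Real.sqrt_le_sqrt hsq
  exact ⟨hfrob, hfrob.trans
    (le_mul_of_one_le_left (Real.sqrt_nonneg _) (one_le_sup'_amplification n ctilde))⟩

theorem stmt11 (n m r : ℕ) [NeZero n] (Δt Δx : ℝ) (hΔt : 0 < Δt) (hΔx : 0 < Δx)
    (A : Matrix (Fin m) (Fin m) ℝ) (hA : A.IsSymm)
    (X0 X1 : Matrix (Fin n) (Fin r) ℝ) (W0 W1 : Matrix (Fin m) (Fin r) ℝ)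
    (hX0 : X0ᵀ * X0 = 1) (hX1 : X1ᵀ * X1 = 1) (hW0 : W0ᵀ * W0 = 1) (hW1 : W1ᵀ * W1 = 1)
    (S0 : Matrix (Fin r) (Fin r) ℝ)
    (M N : Matrix (Fin r) (Fin r) ℝ) (hM : M = X1ᵀ * X0) (hN : N = W1ᵀ * W0)
    (ubar : Matrix (Fin n) (Fin m) ℝ) (hubar : ubar = X1 * M * S0 * Nᵀ * W1ᵀ)
    (S1 : Matrix (Fin r) (Fin r) ℝ)
    (hS1 : S1 = X1ᵀ * (L1 n * ubar - L2 n Δt Δx * ubar * Aᵀ) * W1)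
    (ctilde : ℝ) (hctilde : ctilde = specNorm (W1ᵀ * A * W1) * Δt / Δx)
    (hCFL : ctilde ≤ 1) :
    frob (X1 * S1 * W1ᵀ) ≤ frob (X0 * S0 * W0ᵀ) ∧
    frob (X1 * S1 * W1ᵀ)
      ≤ ((Finset.Icc 1 n).sup'
            (Finset.nonempty_Icc.mpr (Nat.one_le_iff_ne_zero.mpr (NeZero.ne n)))
            (fun α : ℕ =>
              Real.sqrt (Real.cos (2 * π * α / n) ^ 2 + ctilde ^ 2 * Real.sin (2 * π * α / n) ^ 2)))
        * frob (X0 * S0 * W0ᵀ) :=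
  stmt11_general n m r Δt Δx hΔt hΔx A hA X0 X1 W0 W1 hX1 hW1 S0 M N hM hN ubar hubar S1 hS1 ctilde
    hctilde hCFL
end

section
/- Let Δt > 0, let W ∈ ℝ^{m×r} satisfy Wᵀ W = I_r, let X ∈ ℝ^{n×r} satisfy Xᵀ X = I_r, and let G ∈ ℝ^{m×m} be a diagonal real matrix with diagonal entries G_{ℓℓ}. For u ∈ ℝ^{n×m} define the projector-splitting scattering substeps u₁ = u (I + Δt·G) W Wᵀ, u₂ = X Xᵀ u₁ (I − Δt·G) W Wᵀ, u₃ = X Xᵀ u₂ (I + Δt·G). Then ‖u₃‖_F ≤ (max over ℓ of |1 + Δt·G_{ℓℓ}|)² · (max over ℓ of |1 − Δt·G_{ℓℓ}|) · ‖u‖_F. -/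
open Matrix

lemma frob_nonneg {n m : ℕ} (M : Matrix (Fin n) (Fin m) ℝ) : 0 ≤ frob M :=
  Real.sqrt_nonneg _

lemma F2_eq_trace {n m : ℕ} (M : Matrix (Fin n) (Fin m) ℝ) :
    (∑ i, ∑ j, (M i j) ^ 2) = Matrix.trace (Mᵀ * M) := by
  simp only [Matrix.trace, Matrix.diag, Matrix.mul_apply, Matrix.transpose_apply, sq]
  rw [Finset.sum_comm]

lemma frob_transpose {n m : ℕ} (M : Matrix (Fin n) (Fin m) ℝ) : frob Mᵀ = frob M := by
  unfold frob
  rw [Finset.sum_comm]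
  simp [Matrix.transpose_apply]

lemma frob_proj_left {n m r : ℕ} (X : Matrix (Fin n) (Fin r) ℝ) (hX : Xᵀ * X = 1)
    (A : Matrix (Fin n) (Fin m) ℝ) : frob (X * Xᵀ * A) ≤ frob A := by
  set P : Matrix (Fin n) (Fin n) ℝ := X * Xᵀ with hPdef
  have hP : Pᵀ = P := by simp [hPdef, Matrix.transpose_mul]
  have hPP : P * P = P := by
    simp only [hPdef]
    rw [Matrix.mul_assoc, ← Matrix.mul_assoc Xᵀ X Xᵀ, hX, Matrix.one_mul]
  have key : (A - P * A)ᵀ * (A - P * A) = Aᵀ * A - (P * A)ᵀ * (P * A) := by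
    have h1 : (P * A)ᵀ * (P * A) = Aᵀ * (P * A) := by
      rw [Matrix.transpose_mul, hP, Matrix.mul_assoc, ← Matrix.mul_assoc P P A, hPP]
    rw [Matrix.transpose_sub, Matrix.sub_mul, Matrix.mul_sub, Matrix.mul_sub,
      Matrix.transpose_mul, hP]
    have h2 : Aᵀ * P * (P * A) = Aᵀ * (P * A) := by
      rw [Matrix.mul_assoc, ← Matrix.mul_assoc P P A, hPP]
    rw [Matrix.mul_assoc Aᵀ P A, h2]
    abel
  have htr : Matrix.trace ((P * A)ᵀ * (P * A)) ≤ Matrix.trace (Aᵀ * A) := by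
    have h0 : 0 ≤ Matrix.trace ((A - P * A)ᵀ * (A - P * A)) := by
      rw [← F2_eq_trace]
      positivity
    rw [key, Matrix.trace_sub] at h0
    linarith
  unfold frob
  apply Real.sqrt_le_sqrt
  rw [F2_eq_trace, F2_eq_trace]
  exact htr

lemma frob_proj_right {n m r : ℕ} (W : Matrix (Fin m) (Fin r) ℝ) (hW : Wᵀ * W = 1)
    (A : Matrix (Fin n) (Fin m) ℝ) : frob (A * (W * Wᵀ)) ≤ frob A := by
  rw [← frob_transpose (A * (W * Wᵀ)), ← frob_transpose A]
  have : (A * (W * Wᵀ))ᵀ = W * Wᵀ * Aᵀ := by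
    rw [Matrix.transpose_mul, Matrix.transpose_mul, Matrix.transpose_transpose]
  rw [this]
  exact frob_proj_left W hW Aᵀ

lemma frob_diag_right {n m : ℕ} [NeZero m] (D : Matrix (Fin m) (Fin m) ℝ) (hD : D.IsDiag)
    (A : Matrix (Fin n) (Fin m) ℝ) :
    frob (A * D) ≤ (Finset.univ.sup' Finset.univ_nonempty (fun ℓ : Fin m => |D ℓ ℓ|)) * frob A := by
  set c := Finset.univ.sup' Finset.univ_nonempty (fun ℓ : Fin m => |D ℓ ℓ|) with hc
  have hc0 : 0 ≤ c := le_trans (abs_nonneg _)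
    (Finset.le_sup' (fun ℓ : Fin m => |D ℓ ℓ|) (Finset.mem_univ (0 : Fin m)))
  have happ : ∀ i j, (A * D) i j = A i j * D j j := by
    intro i j
    rw [Matrix.mul_apply]
    rw [Finset.sum_eq_single j]
    · intro k _ hk; rw [hD hk, mul_zero]
    · intro h; exact absurd (Finset.mem_univ j) h
  have hsum : (∑ i, ∑ j, ((A * D) i j) ^ 2) ≤ c ^ 2 * ∑ i, ∑ j, (A i j) ^ 2 := by
    rw [Finset.mul_sum]
    apply Finset.sum_le_sum
    intro i _
    rw [Finset.mul_sum]
    apply Finset.sum_le_sum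
    intro j _
    rw [happ, mul_pow]
    have hle : (D j j) ^ 2 ≤ c ^ 2 := by
      rw [← sq_abs (D j j)]
      apply pow_le_pow_left₀ (abs_nonneg _)
      exact Finset.le_sup' (fun ℓ : Fin m => |D ℓ ℓ|) (Finset.mem_univ j)
    calc (A i j) ^ 2 * (D j j) ^ 2 ≤ (A i j) ^ 2 * c ^ 2 :=
          mul_le_mul_of_nonneg_left hle (sq_nonneg _)
      _ = c ^ 2 * (A i j) ^ 2 := by ring
  unfold frob
  calc Real.sqrt (∑ i, ∑ j, ((A * D) i j) ^ 2)
      ≤ Real.sqrt (c ^ 2 * ∑ i, ∑ j, (A i j) ^ 2) := Real.sqrt_le_sqrt hsum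
    _ = c * Real.sqrt (∑ i, ∑ j, (A i j) ^ 2) := by
        rw [Real.sqrt_mul (sq_nonneg c), Real.sqrt_sq hc0]

/- Amplification bound for the projector-splitting scattering substeps (forward-Euler
discretization of the K-, S-, L-equations for ∂_t u = u G with diagonal G). -/
theorem stmt15 (n m r : ℕ) [NeZero m] (Δt : ℝ) (hΔt : 0 < Δt)
    (W : Matrix (Fin m) (Fin r) ℝ) (hW : Wᵀ * W = 1)
    (X : Matrix (Fin n) (Fin r) ℝ) (hX : Xᵀ * X = 1)
    (G : Matrix (Fin m) (Fin m) ℝ) (hG : G.IsDiag)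
    (u u1 u2 u3 : Matrix (Fin n) (Fin m) ℝ)
    (hu1 : u1 = u * (1 + Δt • G) * (W * Wᵀ))
    (hu2 : u2 = X * Xᵀ * u1 * (1 - Δt • G) * (W * Wᵀ))
    (hu3 : u3 = X * Xᵀ * u2 * (1 + Δt • G)) :
    frob u3
      ≤ (Finset.univ.sup' Finset.univ_nonempty (fun ℓ : Fin m => |1 + Δt * G ℓ ℓ|)) ^ 2
        * (Finset.univ.sup' Finset.univ_nonempty (fun ℓ : Fin m => |1 - Δt * G ℓ ℓ|))
        * frob u := by
  set Dp : Matrix (Fin m) (Fin m) ℝ := 1 + Δt • G with hDp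
  set Dm : Matrix (Fin m) (Fin m) ℝ := 1 - Δt • G with hDm
  have hDpDiag : Dp.IsDiag := by
    intro i j hij
    simp [hDp, Matrix.one_apply_ne hij, hG hij]
  have hDmDiag : Dm.IsDiag := by
    intro i j hij
    simp [hDm, Matrix.one_apply_ne hij, hG hij]
  have hDpApp : ∀ ℓ : Fin m, Dp ℓ ℓ = 1 + Δt * G ℓ ℓ := by
    intro ℓ; simp [hDp]
  have hDmApp : ∀ ℓ : Fin m, Dm ℓ ℓ = 1 - Δt * G ℓ ℓ := by
    intro ℓ; simp [hDm]
  set cp := Finset.univ.sup' Finset.univ_nonempty (fun ℓ : Fin m => |1 + Δt * G ℓ ℓ|) with hcp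
  set cm := Finset.univ.sup' Finset.univ_nonempty (fun ℓ : Fin m => |1 - Δt * G ℓ ℓ|) with hcm
  have hcpEq : (Finset.univ.sup' Finset.univ_nonempty (fun ℓ : Fin m => |Dp ℓ ℓ|)) = cp := by
    rw [hcp]; congr 1; ext ℓ; rw [hDpApp]
  have hcmEq : (Finset.univ.sup' Finset.univ_nonempty (fun ℓ : Fin m => |Dm ℓ ℓ|)) = cm := by
    rw [hcm]; congr 1; ext ℓ; rw [hDmApp]
  have hcp0 : 0 ≤ cp := le_trans (abs_nonneg _)
    (Finset.le_sup' (fun ℓ : Fin m => |1 + Δt * G ℓ ℓ|) (Finset.mem_univ (0 : Fin m)))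
  have hcm0 : 0 ≤ cm := le_trans (abs_nonneg _)
    (Finset.le_sup' (fun ℓ : Fin m => |1 - Δt * G ℓ ℓ|) (Finset.mem_univ (0 : Fin m)))
  have h1 : frob u1 ≤ cp * frob u := by
    rw [hu1]
    calc frob (u * Dp * (W * Wᵀ)) ≤ frob (u * Dp) := frob_proj_right W hW _
      _ ≤ cp * frob u := by rw [← hcpEq]; exact frob_diag_right Dp hDpDiag u
  have h2 : frob u2 ≤ cm * frob u1 := by
    rw [hu2]
    calc frob (X * Xᵀ * u1 * Dm * (W * Wᵀ))
        ≤ frob (X * Xᵀ * u1 * Dm) := frob_proj_right W hW _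
      _ = frob (X * Xᵀ * (u1 * Dm)) := by rw [Matrix.mul_assoc]
      _ ≤ frob (u1 * Dm) := frob_proj_left X hX _
      _ ≤ cm * frob u1 := by rw [← hcmEq]; exact frob_diag_right Dm hDmDiag u1
  have h3 : frob u3 ≤ cp * frob u2 := by
    rw [hu3]
    calc frob (X * Xᵀ * u2 * Dp) = frob (X * Xᵀ * (u2 * Dp)) := by rw [Matrix.mul_assoc]
      _ ≤ frob (u2 * Dp) := frob_proj_left X hX _
      _ ≤ cp * frob u2 := by rw [← hcpEq]; exact frob_diag_right Dp hDpDiag u2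
  calc frob u3 ≤ cp * frob u2 := h3
    _ ≤ cp * (cm * frob u1) := mul_le_mul_of_nonneg_left h2 hcp0
    _ ≤ cp * (cm * (cp * frob u)) := by
        exact mul_le_mul_of_nonneg_left (mul_le_mul_of_nonneg_left h1 hcm0) hcp0
    _ = cp ^ 2 * cm * frob u := by ring
end
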